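/- arXiv:2601.17433 — 7 statements merged into one kernel-verified Lean document; each statement's English description precedes it below -/
import Mathlib

section
/- For a, b ∈ SL(2,ℂ), the following are equivalent: (1) a·m·a⁻¹ = b·m·b⁻¹; (2) there exists a nonzero t ∈ ℂ with b = a·q(t); (3) there exists a nonzero t ∈ ℂ with b̃ = ã·p(t). -/
abbrev Mat := Matrix (Fin 2) (Fin 2) ℂ

/-- For `a` with columns `a₁, a₂`, the matrix `ã` with columns `(a₁, a₃)`,
where `a₃ = a₁ − z·a₂`. -/
def tilde (z : ℂ) (a : Mat) : Mat :=
  !![a 0 0, a 0 0 - z * a 0 1;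
     a 1 0, a 1 0 - z * a 1 1]

/-- `q(t) = [[t, (t − t⁻¹)/z], [0, t⁻¹]]`. -/
noncomputable def qMat (z t : ℂ) : Mat := !![t, (t - t⁻¹) / z; 0, t⁻¹]

/-- `p(t) = diag(t, t⁻¹)`. -/
noncomputable def pMat (t : ℂ) : Mat := !![t, 0; 0, t⁻¹]

lemma z_ne (M : ℂ) (hM0 : M ≠ 0) (hM1 : M ≠ 1) (hMneg1 : M ≠ -1) : M - M⁻¹ ≠ 0 := by
  intro h
  have h2 : (M - 1) * (M + 1) = 0 := by
    field_simp at h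
    linear_combination h
  rcases mul_eq_zero.1 h2 with h3 | h3
  · exact hM1 (by linear_combination h3)
  · exact hMneg1 (by linear_combination h3)

lemma qdet (z t : ℂ) (ht : t ≠ 0) : (qMat z t).det = 1 := by
  simp [qMat, Matrix.det_fin_two_of]
  field_simp

lemma comm_iff (M : ℂ) (hz : M - M⁻¹ ≠ 0) (c : Mat) (hc : c.det = 1) :
    c * !![M, 1; 0, M⁻¹] = !![M, 1; 0, M⁻¹] * c ↔
      ∃ t : ℂ, t ≠ 0 ∧ c = qMat (M - M⁻¹) t := by
  constructor
  · intro h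
    have h00 := congrFun (congrFun h 0) 0
    have h01 := congrFun (congrFun h 0) 1
    simp [Matrix.mul_apply, Fin.sum_univ_two] at h00 h01
    have hr : c 1 0 = 0 := by linear_combination -h00
    have hdet : c 0 0 * c 1 1 = 1 := by
      have := hc
      rw [Matrix.det_fin_two, hr] at this
      linear_combination this
    have hp0 : c 0 0 ≠ 0 := left_ne_zero_of_mul_eq_one hdet
    have h11 : c 1 1 = (c 0 0)⁻¹ := by field_simp; linear_combination hdet
    have hq : c 0 1 = (c 0 0 - (c 0 0)⁻¹) / (M - M⁻¹) := by
      rw [eq_div_iff hz]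
      linear_combination -h01 - h11
    refine ⟨c 0 0, hp0, ?_⟩
    ext i j
    fin_cases i <;> fin_cases j <;> simp [qMat, hr, h11, hq]
  · rintro ⟨t, ht, rfl⟩
    have e : (M - M⁻¹) * (M - M⁻¹)⁻¹ = 1 := mul_inv_cancel₀ hz
    ext i j
    fin_cases i <;> fin_cases j <;>
      simp [qMat, Matrix.mul_apply, Fin.sum_univ_two]
    · ring
    · linear_combination (t⁻¹ - t) * e
    · ring

lemma q_iff_tilde (z t : ℂ) (hz : z ≠ 0) (ht : t ≠ 0) (a b : Mat) :
    b = a * qMat z t ↔ tilde z b = tilde z a * pMat t := by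
  constructor
  · rintro rfl
    ext i j
    fin_cases i <;> fin_cases j <;>
      simp [tilde, qMat, pMat, Matrix.mul_apply, Fin.sum_univ_two] <;>
      field_simp <;> ring
  · intro h
    have h00 := congrFun (congrFun h 0) 0
    have h01 := congrFun (congrFun h 0) 1
    have h10 := congrFun (congrFun h 1) 0
    have h11 := congrFun (congrFun h 1) 1
    simp [tilde, pMat, Matrix.mul_apply, Fin.sum_univ_two] at h00 h01 h10 h11
    ext i j
    fin_cases i <;> fin_cases j <;>
      simp [qMat, Matrix.mul_apply, Fin.sum_univ_two]
    · linear_combination h00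
    · field_simp at h01 ⊢
      linear_combination t * h00 - h01
    · linear_combination h10
    · field_simp at h11 ⊢
      linear_combination t * h10 - h11


/-- For `a, b ∈ SL(2,ℂ)` the following are equivalent:
(1) `a·m·a⁻¹ = b·m·b⁻¹`; (2) `b = a·q(t)` for some `t ≠ 0`;
(3) `b̃ = ã·p(t)` for some `t ≠ 0`. -/
theorem conj_eq_iff_q_iff_p (M : ℂ) (hM0 : M ≠ 0) (hM1 : M ≠ 1) (hMneg1 : M ≠ -1)
    (a b : Mat) (ha : a.det = 1) (hb : b.det = 1) :
    (a * !![M, 1; 0, M⁻¹] * a⁻¹ = b * !![M, 1; 0, M⁻¹] * b⁻¹ ↔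
      ∃ t : ℂ, t ≠ 0 ∧ b = a * qMat (M - M⁻¹) t) ∧
    (a * !![M, 1; 0, M⁻¹] * a⁻¹ = b * !![M, 1; 0, M⁻¹] * b⁻¹ ↔
      ∃ t : ℂ, t ≠ 0 ∧ tilde (M - M⁻¹) b = tilde (M - M⁻¹) a * pMat t) := by
  have hz := z_ne M hM0 hM1 hMneg1
  have hua : IsUnit a.det := ha ▸ isUnit_one
  have hub : IsUnit b.det := hb ▸ isUnit_one
  set m : Mat := !![M, 1; 0, M⁻¹] with hm
  have part1 : a * m * a⁻¹ = b * m * b⁻¹ ↔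
      ∃ t : ℂ, t ≠ 0 ∧ b = a * qMat (M - M⁻¹) t := by
    constructor
    · intro h
      have hcd : (a⁻¹ * b).det = 1 := by
        rw [Matrix.det_mul, Matrix.det_nonsing_inv, ha, hb]
        simp
      have hcm : (a⁻¹ * b) * m = m * (a⁻¹ * b) := by
        have h1 : b * m = a * m * a⁻¹ * b := by
          conv_lhs => rw [← Matrix.nonsing_inv_mul_cancel_right b (b * m) hub, ← h]
        calc a⁻¹ * b * m = a⁻¹ * (b * m) := by rw [mul_assoc]
          _ = a⁻¹ * (a * (m * (a⁻¹ * b))) := by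
              rw [h1]; simp only [mul_assoc]
          _ = m * (a⁻¹ * b) := Matrix.nonsing_inv_mul_cancel_left a _ hua
      obtain ⟨t, ht, hct⟩ := (comm_iff M hz _ hcd).1 hcm
      exact ⟨t, ht, by rw [← hct, Matrix.mul_nonsing_inv_cancel_left a b hua]⟩
    · rintro ⟨t, ht, rfl⟩
      have hqd := qdet (M - M⁻¹) t ht
      have huq : IsUnit (qMat (M - M⁻¹) t).det := hqd ▸ isUnit_one
      have hcm : qMat (M - M⁻¹) t * m = m * qMat (M - M⁻¹) t :=
        (comm_iff M hz _ hqd).2 ⟨t, ht, rfl⟩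
      rw [Matrix.mul_inv_rev]
      calc a * m * a⁻¹
          = a * (m * (qMat (M - M⁻¹) t * ((qMat (M - M⁻¹) t)⁻¹ * a⁻¹))) := by
            rw [Matrix.mul_nonsing_inv_cancel_left _ _ huq, mul_assoc]
        _ = a * (m * qMat (M - M⁻¹) t * ((qMat (M - M⁻¹) t)⁻¹ * a⁻¹)) := by
            simp only [mul_assoc]
        _ = a * (qMat (M - M⁻¹) t * m * ((qMat (M - M⁻¹) t)⁻¹ * a⁻¹)) := by rw [hcm]
        _ = a * qMat (M - M⁻¹) t * m * ((qMat (M - M⁻¹) t)⁻¹ * a⁻¹) := by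
            simp only [mul_assoc]
  refine ⟨part1, part1.trans ⟨?_, ?_⟩⟩
  · rintro ⟨t, ht, h⟩
    exact ⟨t, ht, (q_iff_tilde _ t hz ht a b).1 h⟩
  · rintro ⟨t, ht, h⟩
    exact ⟨t, ht, (q_iff_tilde _ t hz ht a b).2 h⟩
end

section
/- The entries of W are given by: W₁₁ = Σ_{k=0}^{(α−1)/2} c_{2k}^{α−1}(M,ε)·λᵏ, W₁₂ = Σ_{k=0}^{(α−3)/2} c_{2k+1}^{α−1}(M,ε)·λᵏ, W₂₁ = λ·Σ_{k=0}^{(α−3)/2} d_{2k+1}^{α−1}(M,ε)·λᵏ = λ·W₁₂, and W₂₂ = Σ_{k=0}^{(α−3)/2} d_{2k}^{α−1}(M,ε)·λᵏ. -/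
/-- Admissibility of a tuple `i : Fin k → ℕ`: strictly increasing, values in `[1, n]`,
and the `j`-th entry (0-based) has parity `(j + start) % 2`.  `start = 1` gives the
"odd-start admissible" tuples (`i_j` odd for odd 1-based positions `j`), while
`start = 0` gives the "even-start admissible" tuples. -/
def Adm (n k start : ℕ) (i : Fin k → ℕ) : Prop :=
  (∀ j j' : Fin k, j < j' → i j < i j') ∧
  (∀ j : Fin k, 1 ≤ i j ∧ i j ≤ n) ∧
  (∀ j : Fin k, i j % 2 = (j.val + start) % 2)

instance (n k start : ℕ) : DecidablePred (Adm n k start) := fun _ => by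
  unfold Adm; infer_instance

/-- `ĥ(i₁,…,i_k)`: the signed sum of the `ε_t`, `1 ≤ t ≤ n`, omitting the `t` lying in
the tuple, where `ε_t` gets the sign `(−1)^{#{j : i_j < t}}`; this agrees with
`(ε₁+⋯+ε_{i₁−1}) − (ε_{i₁+1}+⋯+ε_{i₂−1}) + ⋯ + (−1)^k (ε_{i_k+1}+⋯+ε_n)`. -/
def hatSum (n : ℕ) (ε : ℕ → ℤ) {k : ℕ} (i : Fin k → ℕ) : ℤ :=
  ∑ t ∈ Finset.Icc 1 n,
    if ∃ j, i j = t then 0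
    else (-1) ^ (Finset.univ.filter fun j : Fin k => i j < t).card * ε t

/-- `ĥᵃˡᵗ(i₁,…,i_k)`: the alternating sum (signs −,+,−,+,… in increasing order)
of the `ε_t`, `1 ≤ t ≤ n`, with `t` not in the tuple. -/
def hatAltSum (n : ℕ) (ε : ℕ → ℤ) {k : ℕ} (i : Fin k → ℕ) : ℤ :=
  ∑ t ∈ Finset.Icc 1 n,
    if ∃ j, i j = t then 0
    else (-1) ^ ((Finset.Icc 1 t).filter fun s => ¬∃ j, i j = s).card * ε t

/-- `c_k^n(M, ε) = Σ ε_{i₁}⋯ε_{i_k}·M^{ĥ(i₁,…,i_k)}` over odd-start admissible tuples.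
For `k = 0` this is `M^{ε₁+⋯+ε_n}`, and it vanishes for `k > n`. -/
noncomputable def cP (n k : ℕ) (ε : ℕ → ℤ) (M : ℂ) : ℂ :=
  ∑ i : Fin k → Fin (n + 1),
    if Adm n k 1 (fun j => (i j : ℕ))
    then (∏ j : Fin k, (ε (i j : ℕ) : ℂ)) * M ^ hatSum n ε (fun j => (i j : ℕ))
    else 0

/-- `d_k^n(M, ε) = Σ ε_{i₁}⋯ε_{i_k}·M^{−ĥ(i₁,…,i_k)}` over even-start admissible tuples.
For `k = 0` this is `M^{−(ε₁+⋯+ε_n)}`, and it vanishes for `k > n`. -/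
noncomputable def dP (n k : ℕ) (ε : ℕ → ℤ) (M : ℂ) : ℂ :=
  ∑ i : Fin k → Fin (n + 1),
    if Adm n k 0 (fun j => (i j : ℕ))
    then (∏ j : Fin k, (ε (i j : ℕ) : ℂ)) * M ^ (-hatSum n ε (fun j => (i j : ℕ)))
    else 0

/-- `c̃_k^n(M, ε) = Σ ε_{i₁}⋯ε_{i_k}·M^{ĥᵃˡᵗ(i₁,…,i_k)}` over odd-start admissible
tuples.  For `k = 0` this is `M^{−ε₁+ε₂−⋯+(−1)ⁿ εₙ}`, it equals `1` for `k = n = 0`,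
and it vanishes for `k > n`. -/
noncomputable def cT (n k : ℕ) (ε : ℕ → ℤ) (M : ℂ) : ℂ :=
  ∑ i : Fin k → Fin (n + 1),
    if Adm n k 1 (fun j => (i j : ℕ))
    then (∏ j : Fin k, (ε (i j : ℕ) : ℂ)) * M ^ hatAltSum n ε (fun j => (i j : ℕ))
    else 0

/-- `d̃_k^n(M, ε) = Σ ε_{i₁}⋯ε_{i_k}·M^{−ĥᵃˡᵗ(i₁,…,i_k)}` over even-start admissible
tuples. -/
noncomputable def dT (n k : ℕ) (ε : ℕ → ℤ) (M : ℂ) : ℂ :=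
  ∑ i : Fin k → Fin (n + 1),
    if Adm n k 0 (fun j => (i j : ℕ))
    then (∏ j : Fin k, (ε (i j : ℕ) : ℂ)) * M ^ (-hatAltSum n ε (fun j => (i j : ℕ)))
    else 0

/-- The word `W = X^{ε₁} Y^{ε₂} X^{ε₃} Y^{ε₄} ⋯ X^{ε_{α−2}} Y^{ε_{α−1}}`
(letters with odd index are powers of `X`, even index powers of `Y`). -/
noncomputable def Wword (α : ℕ) (ε : ℕ → ℤ) (X Y : Mat) : Mat :=
  ((List.range (α - 1)).map fun i =>
    (if (i + 1) % 2 = 1 then X else Y) ^ ε (i + 1)).prod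

noncomputable def S (n k start : ℕ) (σ : ℤ) (ε : ℕ → ℤ) (M : ℂ) : ℂ :=
  ∑ i : Fin k → Fin (n + 1),
    if Adm n k start (fun j => (i j : ℕ))
    then (∏ j : Fin k, (ε (i j : ℕ) : ℂ)) * M ^ (σ * hatSum n ε (fun j => (i j : ℕ)))
    else 0

-- growth of admissible tuples
lemma adm_le {n k start : ℕ} {i : Fin k → ℕ} (h : Adm n k start i) :
    ∀ (v : ℕ) (hv : v < k), v + 1 ≤ i ⟨v, hv⟩ := by
  intro v
  induction v with
  | zero => intro hv; exact (h.2.1 ⟨0, hv⟩).1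
  | succ w ih =>
    intro hv
    have hw : w < k := by omega
    have := ih hw
    have := h.1 ⟨w, hw⟩ ⟨w+1, hv⟩ (by simp)
    omega

lemma S_vanish {n k : ℕ} (start : ℕ) (σ : ℤ) (ε : ℕ → ℤ) (M : ℂ) (h : n < k) :
    S n k start σ ε M = 0 := by
  unfold S
  apply Finset.sum_eq_zero
  intro i _
  rw [if_neg]
  intro hadm
  have hk : 0 < k := by omega
  have h1 := adm_le hadm (k-1) (by omega)
  have h2 := (hadm.2.1 ⟨k-1, by omega⟩).2
  omega

lemma S_zero_n (k start : ℕ) (σ : ℤ) (ε : ℕ → ℤ) (M : ℂ) (h : 0 < k) :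
    S 0 k start σ ε M = 0 := S_vanish start σ ε M h

lemma S_zero_zero (start : ℕ) (σ : ℤ) (ε : ℕ → ℤ) (M : ℂ) :
    S 0 0 start σ ε M = 1 := by
  unfold S
  rw [Fintype.sum_eq_single (fun j : Fin 0 => j.elim0) (by intro i; exact fun h => absurd (funext fun j => j.elim0) h)]
  rw [if_pos]
  · simp [hatSum]
  · exact ⟨fun j => j.elim0, fun j => j.elim0, fun j => j.elim0⟩

lemma hatSum_notmem {n : ℕ} (ε : ℕ → ℤ) {k : ℕ} {i : Fin k → ℕ} (h : ∀ j, i j ≤ n) :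
    hatSum (n+1) ε i = hatSum n ε i + (-1)^k * ε (n+1) := by
  unfold hatSum
  rw [Finset.sum_Icc_succ_top (by omega)]
  congr 1
  rw [if_neg (by push_neg; intro j; have := h j; omega)]
  congr 2
  rw [Finset.filter_true_of_mem (fun j _ => by have := h j; omega)]
  simp

lemma hatSum_snoc {n : ℕ} (ε : ℕ → ℤ) {k : ℕ} {i : Fin k → ℕ} :
    hatSum (n+1) ε (Fin.snoc i (n+1)) = hatSum n ε i := by
  unfold hatSum
  rw [Finset.sum_Icc_succ_top (by omega)]
  rw [if_pos ⟨Fin.last k, Fin.snoc_last _ _⟩, add_zero]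
  apply Finset.sum_congr rfl
  intro t ht
  have htn : t ≤ n := (Finset.mem_Icc.mp ht).2
  have hex : (∃ j : Fin (k+1), (Fin.snoc i (n+1) : Fin (k+1) → ℕ) j = t) ↔ (∃ j : Fin k, i j = t) := by
    constructor
    · rintro ⟨j, hj⟩
      rcases Fin.eq_castSucc_or_eq_last j with ⟨j', rfl⟩ | rfl
      · exact ⟨j', by rwa [Fin.snoc_castSucc] at hj⟩
      · rw [Fin.snoc_last] at hj; omega
    · rintro ⟨j, hj⟩; exact ⟨j.castSucc, by rwa [Fin.snoc_castSucc]⟩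
  by_cases hc : ∃ j : Fin k, i j = t
  · rw [if_pos (hex.mpr hc), if_pos hc]
  · rw [if_neg (fun hh => hc (hex.mp hh)), if_neg hc]
    congr 2
    rw [Finset.card_filter, Finset.card_filter, Fin.sum_univ_castSucc]
    simp only [Fin.snoc_castSucc, Fin.snoc_last]
    rw [if_neg (by omega), add_zero]

-- the top element of a non-bounded admissible tuple
lemma adm_top {n k start : ℕ} {i : Fin (k+1) → ℕ} (h : Adm (n+1) (k+1) start i)
    (hj : ¬ ∀ j, i j ≤ n) : i (Fin.last k) = n+1 ∧ (n+1) % 2 = (k + start) % 2 := by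
  push_neg at hj
  obtain ⟨j, hjn⟩ := hj
  have hb := (h.2.1 j).2
  have hij : i j = n + 1 := by omega
  have hlast : i (Fin.last k) = n + 1 := by
    rcases eq_or_lt_of_le (Fin.le_last j) with heq | hlt
    · rwa [← heq]
    · have := h.1 j (Fin.last k) hlt
      have := (h.2.1 (Fin.last k)).2
      omega
  refine ⟨hlast, ?_⟩
  have := h.2.2 (Fin.last k)
  rw [hlast] at this
  simpa using this

lemma sum_split (n k start : ℕ) (σ : ℤ) (ε : ℕ → ℤ) (M : ℂ) :
    S (n+1) k start σ ε M =
    (∑ i : Fin k → Fin (n + 2),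
      if Adm (n+1) k start (fun j => (i j : ℕ)) ∧ ∀ j, (i j : ℕ) ≤ n
      then (∏ j : Fin k, (ε (i j : ℕ) : ℂ)) * M ^ (σ * hatSum (n+1) ε (fun j => (i j : ℕ)))
      else 0) +
    (∑ i : Fin k → Fin (n + 2),
      if Adm (n+1) k start (fun j => (i j : ℕ)) ∧ ¬ ∀ j, (i j : ℕ) ≤ n
      then (∏ j : Fin k, (ε (i j : ℕ) : ℂ)) * M ^ (σ * hatSum (n+1) ε (fun j => (i j : ℕ)))
      else 0) := by
  unfold S
  rw [← Finset.sum_add_distrib]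
  apply Finset.sum_congr rfl
  intro i _
  by_cases h1 : Adm (n+1) k start (fun j => (i j : ℕ))
  · by_cases h2 : ∀ j, (i j : ℕ) ≤ n
    · rw [if_pos h1, if_pos ⟨h1, h2⟩, if_neg (fun hh => hh.2 h2), add_zero]
    · rw [if_pos h1, if_neg (fun hh => h2 hh.2), if_pos ⟨h1, h2⟩, zero_add]
  · rw [if_neg h1, if_neg (fun hh => h1 hh.1), if_neg (fun hh => h1 hh.1), add_zero]

lemma sum_partA (n k start : ℕ) (σ : ℤ) (ε : ℕ → ℤ) (M : ℂ) (hM0 : M ≠ 0) :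
    (∑ i : Fin k → Fin (n + 2),
      if Adm (n+1) k start (fun j => (i j : ℕ)) ∧ ∀ j, (i j : ℕ) ≤ n
      then (∏ j : Fin k, (ε (i j : ℕ) : ℂ)) * M ^ (σ * hatSum (n+1) ε (fun j => (i j : ℕ)))
      else 0)
    = M ^ (σ * ((-1)^k * ε (n+1))) * S n k start σ ε M := by
  unfold S
  rw [Finset.mul_sum]
  simp only [mul_ite, mul_zero]
  rw [← Finset.sum_filter, ← Finset.sum_filter]
  refine Finset.sum_nbij'
    (fun (f : Fin k → Fin (n+2)) (j : Fin k) => (⟨min (f j : ℕ) n, by omega⟩ : Fin (n+1)))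
    (fun (g : Fin k → Fin (n+1)) (j : Fin k) => (g j).castSucc) ?_ ?_ ?_ ?_ ?_
  · intro f hf
    rw [Finset.mem_filter] at hf ⊢
    obtain ⟨-, ⟨ha, hb⟩⟩ := hf
    refine ⟨Finset.mem_univ _, ?_⟩
    have hval : (fun j => ((⟨min (f j : ℕ) n, by omega⟩ : Fin (n+1)) : ℕ)) = fun j => (f j : ℕ) := by
      funext j; simp [min_eq_left (hb j)]
    rw [hval]
    exact ⟨ha.1, fun j => ⟨(ha.2.1 j).1, hb j⟩, ha.2.2⟩
  · intro g hg
    rw [Finset.mem_filter] at hg ⊢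
    obtain ⟨-, ha⟩ := hg
    simp only [Fin.coe_castSucc]
    exact ⟨Finset.mem_univ _, ⟨ha.1, fun j => ⟨(ha.2.1 j).1,
      le_trans (ha.2.1 j).2 (Nat.le_succ n)⟩, ha.2.2⟩, fun j => (ha.2.1 j).2⟩
  · intro f hf
    rw [Finset.mem_filter] at hf
    funext j
    ext
    simp [min_eq_left (hf.2.2 j)]
  · intro g hg
    funext j
    ext
    simp [(Finset.mem_filter.mp hg).2.2.1 j |>.2]
  · intro f hf
    rw [Finset.mem_filter] at hf
    obtain ⟨-, ⟨ha, hb⟩⟩ := hf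
    have hval : (fun j => ((⟨min (f j : ℕ) n, by omega⟩ : Fin (n+1)) : ℕ)) = fun j => (f j : ℕ) := by
      funext j; simp [min_eq_left (hb j)]
    rw [hval, hatSum_notmem ε hb, mul_add, zpow_add₀ hM0]
    have hprod : (∏ x : Fin k, (ε ((f x : ℕ) ⊓ n) : ℂ)) = ∏ x : Fin k, (ε ((f x : ℕ)) : ℂ) := by
      apply Finset.prod_congr rfl; intro x _; rw [min_eq_left (hb x)]
    rw [hprod]
    ring

lemma adm_snoc {n k start : ℕ} {g : Fin k → ℕ} (h : Adm n k start g)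
    (hpar : (n+1) % 2 = (k + start) % 2) :
    Adm (n+1) (k+1) start (Fin.snoc g (n+1)) := by
  refine ⟨?_, ?_, ?_⟩
  · intro j j' hjj
    rcases Fin.eq_castSucc_or_eq_last j' with ⟨a, rfl⟩ | rfl
    · rcases Fin.eq_castSucc_or_eq_last j with ⟨b, rfl⟩ | rfl
      · simp only [Fin.snoc_castSucc]
        exact h.1 b a (Fin.castSucc_lt_castSucc_iff.mp hjj)
      · exfalso
        have h1 : (Fin.last k).val < (a.castSucc).val := hjj
        have h2 : a.val < k := a.isLt
        simp only [Fin.val_last, Fin.coe_castSucc] at h1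
        omega
    · rcases Fin.eq_castSucc_or_eq_last j with ⟨b, rfl⟩ | rfl
      · simp only [Fin.snoc_castSucc, Fin.snoc_last]
        have := (h.2.1 b).2; omega
      · exact absurd hjj (lt_irrefl _)
  · intro j
    rcases Fin.eq_castSucc_or_eq_last j with ⟨b, rfl⟩ | rfl
    · simp only [Fin.snoc_castSucc]
      exact ⟨(h.2.1 b).1, le_trans (h.2.1 b).2 (by omega)⟩
    · simp [Fin.snoc_last]
  · intro j
    rcases Fin.eq_castSucc_or_eq_last j with ⟨b, rfl⟩ | rfl
    · simp only [Fin.snoc_castSucc, Fin.coe_castSucc]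
      exact h.2.2 b
    · simp only [Fin.snoc_last, Fin.val_last]
      omega

lemma sum_partB (n k start : ℕ) (σ : ℤ) (ε : ℕ → ℤ) (M : ℂ)
    (hpar : (n+1) % 2 = (k + start) % 2) :
    (∑ i : Fin (k+1) → Fin (n + 2),
      if Adm (n+1) (k+1) start (fun j => (i j : ℕ)) ∧ ¬ ∀ j, (i j : ℕ) ≤ n
      then (∏ j : Fin (k+1), (ε (i j : ℕ) : ℂ)) * M ^ (σ * hatSum (n+1) ε (fun j => (i j : ℕ)))
      else 0)
    = (ε (n+1) : ℂ) * S n k start σ ε M := by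
  unfold S
  rw [Finset.mul_sum]
  simp only [mul_ite, mul_zero]
  rw [← Finset.sum_filter, ← Finset.sum_filter]
  refine Finset.sum_nbij'
    (fun (f : Fin (k+1) → Fin (n+2)) (j : Fin k) => (⟨min (f j.castSucc : ℕ) n, by omega⟩ : Fin (n+1)))
    (fun (g : Fin k → Fin (n+1)) => Fin.snoc (fun j => (g j).castSucc) (⟨n+1, by omega⟩ : Fin (n+2)))
    ?_ ?_ ?_ ?_ ?_
  · intro f hf
    rw [Finset.mem_filter] at hf
    obtain ⟨-, ha, hb⟩ := hf
    obtain ⟨hlast, -⟩ := adm_top ha hb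
    have hlast : (f (Fin.last k) : ℕ) = n + 1 := hlast
    have hcs : ∀ j : Fin k, (f j.castSucc : ℕ) ≤ n := by
      intro j
      have h1 : (f j.castSucc : ℕ) < (f (Fin.last k) : ℕ) :=
        ha.1 j.castSucc (Fin.last k) (Fin.castSucc_lt_last j)
      omega
    rw [Finset.mem_filter]
    refine ⟨Finset.mem_univ _, ?_⟩
    have hval : (fun j : Fin k => (((⟨min (f j.castSucc : ℕ) n, by omega⟩ : Fin (n+1))) : ℕ))
        = fun j => (f j.castSucc : ℕ) := funext fun j => min_eq_left (hcs j)
    rw [hval]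
    exact ⟨fun j j' hjj => ha.1 _ _ (Fin.castSucc_lt_castSucc_iff.mpr hjj),
      fun j => ⟨(ha.2.1 j.castSucc).1, hcs j⟩,
      fun j => by simpa using ha.2.2 j.castSucc⟩
  · intro g hg
    rw [Finset.mem_filter] at hg
    obtain ⟨-, hg'⟩ := hg
    rw [Finset.mem_filter]
    have hcoe : (fun j : Fin (k+1) =>
        ((Fin.snoc (fun j => (g j).castSucc) (⟨n+1, by omega⟩ : Fin (n+2)) : Fin (k+1) → Fin (n+2)) j : ℕ))
        = Fin.snoc (fun j : Fin k => (g j : ℕ)) (n+1) := by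
      funext j
      rcases Fin.eq_castSucc_or_eq_last j with ⟨b, rfl⟩ | rfl
      · simp [Fin.snoc_castSucc]
      · simp [Fin.snoc_last]
    refine ⟨Finset.mem_univ _, ?_, ?_⟩
    · rw [hcoe]
      exact adm_snoc hg' hpar
    · intro hall
      have := hall (Fin.last k)
      simp only [Fin.snoc_last] at this
      omega
  · intro f hf
    rw [Finset.mem_filter] at hf
    obtain ⟨-, ha, hb⟩ := hf
    obtain ⟨hlast, -⟩ := adm_top ha hb
    have hlast : (f (Fin.last k) : ℕ) = n + 1 := hlast
    have hcs : ∀ j : Fin k, (f j.castSucc : ℕ) ≤ n := by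
      intro j
      have h1 : (f j.castSucc : ℕ) < (f (Fin.last k) : ℕ) :=
        ha.1 j.castSucc (Fin.last k) (Fin.castSucc_lt_last j)
      omega
    funext j
    rcases Fin.eq_castSucc_or_eq_last j with ⟨b, rfl⟩ | rfl
    · simp only [Fin.snoc_castSucc]
      ext
      simp [min_eq_left (hcs b)]
    · simp only [Fin.snoc_last]
      ext
      simp [hlast.symm]
  · intro g hg
    funext j
    simp only [Fin.snoc_castSucc]
    ext
    simp [(Finset.mem_filter.mp hg).2.2.1 j |>.2]
  · intro f hf
    rw [Finset.mem_filter] at hf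
    obtain ⟨-, ha, hb⟩ := hf
    obtain ⟨hlast, -⟩ := adm_top ha hb
    have hlast : (f (Fin.last k) : ℕ) = n + 1 := hlast
    have hcs : ∀ j : Fin k, (f j.castSucc : ℕ) ≤ n := by
      intro j
      have h1 : (f j.castSucc : ℕ) < (f (Fin.last k) : ℕ) :=
        ha.1 j.castSucc (Fin.last k) (Fin.castSucc_lt_last j)
      omega
    have hfun : (fun j : Fin (k+1) => ((f j : ℕ))) =
        Fin.snoc (fun j : Fin k => ((f j.castSucc : ℕ))) (n+1) := by
      funext j
      rcases Fin.eq_castSucc_or_eq_last j with ⟨b, rfl⟩ | rfl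
      · simp [Fin.snoc_castSucc]
      · simp [Fin.snoc_last, hlast]
    have hval : (fun j : Fin k => (((⟨min (f j.castSucc : ℕ) n, by omega⟩ : Fin (n+1))) : ℕ))
        = fun j => (f j.castSucc : ℕ) := funext fun j => min_eq_left (hcs j)
    rw [hfun, hatSum_snoc, hval]
    rw [Fin.prod_univ_castSucc]
    simp only [Fin.snoc_castSucc, Fin.snoc_last]
    have hprod : (∏ x : Fin k, (ε ((f x.castSucc : ℕ) ⊓ n) : ℂ)) = ∏ x : Fin k, (ε ((f x.castSucc : ℕ)) : ℂ) := by
      apply Finset.prod_congr rfl; intro x _; rw [min_eq_left (hcs x)]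
    rw [hprod, hlast]
    ring

lemma S_succ_ne (n k start : ℕ) (σ : ℤ) (ε : ℕ → ℤ) (M : ℂ) (hM0 : M ≠ 0)
    (h : k = 0 ∨ (n+1) % 2 ≠ (k - 1 + start) % 2) :
    S (n+1) k start σ ε M = M ^ (σ * ((-1)^k * ε (n+1))) * S n k start σ ε M := by
  rw [sum_split, sum_partA _ _ _ _ _ _ hM0]
  have hz : (∑ i : Fin k → Fin (n + 2),
      if Adm (n+1) k start (fun j => (i j : ℕ)) ∧ ¬ ∀ j, (i j : ℕ) ≤ n
      then (∏ j : Fin k, (ε (i j : ℕ) : ℂ)) * M ^ (σ * hatSum (n+1) ε (fun j => (i j : ℕ)))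
      else 0) = 0 := by
    apply Finset.sum_eq_zero
    intro i _
    rw [if_neg]
    rintro ⟨ha, hb⟩
    cases k with
    | zero => exact hb (fun j => j.elim0)
    | succ k' =>
      obtain ⟨-, hp⟩ := adm_top ha hb
      rcases h with h | h
      · omega
      · omega
  rw [hz]
  ring

lemma S_succ_eq (n k start : ℕ) (σ : ℤ) (ε : ℕ → ℤ) (M : ℂ) (hM0 : M ≠ 0)
    (h : (n+1) % 2 = (k + start) % 2) :
    S (n+1) (k+1) start σ ε M
      = M ^ (σ * ((-1)^(k+1) * ε (n+1))) * S n (k+1) start σ ε M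
        + (ε (n+1) : ℂ) * S n k start σ ε M := by
  rw [sum_split, sum_partA _ _ _ _ _ _ hM0, sum_partB _ _ _ _ _ _ h]

lemma poly_scale (B : ℕ) (f g : ℕ → ℂ) (c lam : ℂ) (h : ∀ k ≤ B, f k = c * g k) :
    ∑ k ∈ Finset.range (B+1), f k * lam^k = c * ∑ k ∈ Finset.range (B+1), g k * lam^k := by
  rw [Finset.mul_sum]
  apply Finset.sum_congr rfl
  intro k hk
  rw [h k (by simp at hk; omega)]
  ring

lemma poly_mix (B : ℕ) (f g h : ℕ → ℂ) (c e lam : ℂ) (hs : ∀ k ≤ B, f k = c * g k + e * h k) :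
    ∑ k ∈ Finset.range (B+1), f k * lam^k
      = c * ∑ k ∈ Finset.range (B+1), g k * lam^k + e * ∑ k ∈ Finset.range (B+1), h k * lam^k := by
  rw [Finset.mul_sum, Finset.mul_sum, ← Finset.sum_add_distrib]
  apply Finset.sum_congr rfl
  intro k hk
  rw [hs k (by simp at hk; omega)]
  ring

lemma poly_shift (B : ℕ) (f g h : ℕ → ℂ) (c e lam : ℂ)
    (h0 : f 0 = c * g 0) (hs : ∀ k < B, f (k+1) = c * g (k+1) + e * h k) (htop : h B = 0) :
    ∑ k ∈ Finset.range (B+1), f k * lam^k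
      = c * ∑ k ∈ Finset.range (B+1), g k * lam^k
        + e * lam * ∑ k ∈ Finset.range (B+1), h k * lam^k := by
  rw [Finset.sum_range_succ' (fun k => f k * lam^k) B,
      Finset.mul_sum, Finset.mul_sum,
      Finset.sum_range_succ' (fun k => c * (g k * lam^k)) B,
      Finset.sum_range_succ (fun k => e * lam * (h k * lam^k)) B,
      htop]
  have key : ∀ k ∈ Finset.range B,
      f (k+1) * lam^(k+1) = c * (g (k+1) * lam^(k+1)) + e * lam * (h k * lam^k) := by
    intro k hk
    rw [hs k (Finset.mem_range.mp hk)]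
    ring
  rw [Finset.sum_congr rfl key, Finset.sum_add_distrib, h0]
  ring

lemma Xpow (M : ℂ) (hM0 : M ≠ 0) (e : ℤ) (he : e = 1 ∨ e = -1) :
    (!![M, 1; 0, M⁻¹] : Mat) ^ e = !![M ^ e, (e : ℂ); 0, M ^ (-e)] := by
  rcases he with rfl | rfl
  · rw [zpow_one]
    norm_num
  · rw [zpow_neg_one, Matrix.inv_eq_right_inv (B := !![M⁻¹, -1; 0, M])]
    · norm_num
    · ext i j
      fin_cases i <;> fin_cases j <;>
        simp [Matrix.mul_apply, Fin.sum_univ_two, Matrix.one_apply,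
          mul_inv_cancel₀ hM0, inv_mul_cancel₀ hM0]

lemma Ypow (M : ℂ) (hM0 : M ≠ 0) (lam : ℂ) (e : ℤ) (he : e = 1 ∨ e = -1) :
    (!![M, 0; lam, M⁻¹] : Mat) ^ e = !![M ^ e, 0; (e : ℂ) * lam, M ^ (-e)] := by
  rcases he with rfl | rfl
  · rw [zpow_one]
    norm_num
  · rw [zpow_neg_one, Matrix.inv_eq_right_inv (B := !![M⁻¹, 0; -lam, M])]
    · norm_num
    · ext i j
      fin_cases i <;> fin_cases j <;>
        simp [Matrix.mul_apply, Fin.sum_univ_two, Matrix.one_apply,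
          mul_inv_cancel₀ hM0, inv_mul_cancel₀ hM0] <;> ring

noncomputable def Wp (ε : ℕ → ℤ) (X Y : Mat) (m : ℕ) : Mat :=
  ((List.range m).map fun i => (if (i + 1) % 2 = 1 then X else Y) ^ ε (i + 1)).prod

lemma Wp_succ (ε : ℕ → ℤ) (X Y : Mat) (m : ℕ) :
    Wp ε X Y (m+1) = Wp ε X Y m * (if (m + 1) % 2 = 1 then X else Y) ^ ε (m + 1) := by
  unfold Wp
  rw [List.range_succ, List.map_append, List.prod_append]
  simp

lemma master (M : ℂ) (hM0 : M ≠ 0) (lam : ℂ) (ε : ℕ → ℤ) (N B : ℕ) (hB : N ≤ B)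
    (hε : ∀ i, 1 ≤ i → i ≤ N → ε i = 1 ∨ ε i = -1) :
    ∀ m, m ≤ N →
      (Wp ε !![M, 1; 0, M⁻¹] !![M, 0; lam, M⁻¹] m) 0 0
          = ∑ k ∈ Finset.range (B+1), S m (2*k) 1 1 ε M * lam^k ∧
      (Wp ε !![M, 1; 0, M⁻¹] !![M, 0; lam, M⁻¹] m) 0 1
          = ∑ k ∈ Finset.range (B+1), S m (2*k+1) 1 1 ε M * lam^k ∧
      (Wp ε !![M, 1; 0, M⁻¹] !![M, 0; lam, M⁻¹] m) 1 0
          = lam * ∑ k ∈ Finset.range (B+1), S m (2*k+1) 0 (-1) ε M * lam^k ∧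
      (Wp ε !![M, 1; 0, M⁻¹] !![M, 0; lam, M⁻¹] m) 1 1
          = ∑ k ∈ Finset.range (B+1), S m (2*k) 0 (-1) ε M * lam^k := by
  intro m
  induction m with
  | zero =>
    intro _
    have hone : Wp ε !![M, 1; 0, M⁻¹] !![M, 0; lam, M⁻¹] 0 = 1 := by simp [Wp]
    rw [hone]
    have hc0 : ∀ (start : ℕ) (σ : ℤ),
        ∑ k ∈ Finset.range (B+1), S 0 (2*k) start σ ε M * lam^k = 1 := by
      intro start σ
      rw [Finset.sum_eq_single 0]
      · simp [S_zero_zero]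
      · intro k _ hk
        rw [S_vanish start σ ε M (by omega), zero_mul]
      · simp
    have hc1 : ∀ (start : ℕ) (σ : ℤ),
        ∑ k ∈ Finset.range (B+1), S 0 (2*k+1) start σ ε M * lam^k = 0 := by
      intro start σ
      apply Finset.sum_eq_zero
      intro k _
      rw [S_vanish start σ ε M (by omega), zero_mul]
    rw [hc0, hc0, hc1, hc1]
    refine ⟨?_, ?_, ?_, ?_⟩ <;> simp [Matrix.one_apply]
  | succ m ih =>
    intro hm
    obtain ⟨ih00, ih01, ih10, ih11⟩ := ih (by omega)
    have he : ε (m+1) = 1 ∨ ε (m+1) = -1 := hε (m+1) (by omega) (by omega)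
    rw [Wp_succ]
    by_cases hpar : (m + 1) % 2 = 1
    · -- X step
      rw [if_pos hpar, Xpow M hM0 (ε (m+1)) he]
      have E00 : ∀ k ≤ B, S (m+1) (2*k) 1 1 ε M = M ^ (ε (m+1)) * S m (2*k) 1 1 ε M := by
        intro k _
        rw [S_succ_ne m (2*k) 1 1 ε M hM0 (by omega),
          Even.neg_one_pow (⟨k, by ring⟩ : Even (2*k))]
        simp only [one_mul]
      have E01 : ∀ k ≤ B, S (m+1) (2*k+1) 1 1 ε M
          = (M ^ (ε (m+1)))⁻¹ * S m (2*k+1) 1 1 ε M + ((ε (m+1) : ℤ) : ℂ) * S m (2*k) 1 1 ε M := by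
        intro k _
        rw [S_succ_eq m (2*k) 1 1 ε M hM0 (by omega),
          Odd.neg_one_pow (⟨k, by ring⟩ : Odd (2*k+1))]
        simp only [one_mul, neg_one_mul, zpow_neg]
      have E10 : ∀ k ≤ B, S (m+1) (2*k+1) 0 (-1) ε M = M ^ (ε (m+1)) * S m (2*k+1) 0 (-1) ε M := by
        intro k _
        rw [S_succ_ne m (2*k+1) 0 (-1) ε M hM0 (by omega),
          Odd.neg_one_pow (⟨k, by ring⟩ : Odd (2*k+1))]
        simp only [neg_one_mul, neg_neg]
      have E11a : S (m+1) 0 0 (-1) ε M = (M ^ (ε (m+1)))⁻¹ * S m 0 0 (-1) ε M := by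
        rw [S_succ_ne m 0 0 (-1) ε M hM0 (Or.inl rfl)]
        simp only [pow_zero, one_mul, neg_one_mul, zpow_neg]
      have E11b : ∀ k < B, S (m+1) (2*(k+1)) 0 (-1) ε M
          = (M ^ (ε (m+1)))⁻¹ * S m (2*(k+1)) 0 (-1) ε M + ((ε (m+1) : ℤ) : ℂ) * S m (2*k+1) 0 (-1) ε M := by
        intro k _
        rw [show 2*(k+1) = (2*k+1)+1 by ring,
          S_succ_eq m (2*k+1) 0 (-1) ε M hM0 (by omega),
          Even.neg_one_pow (⟨k+1, by ring⟩ : Even (2*k+1+1))]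
        simp only [one_mul, neg_one_mul, zpow_neg]
      have htop : S m (2*B+1) 0 (-1) ε M = 0 := S_vanish _ _ _ _ (by omega)
      refine ⟨?_, ?_, ?_, ?_⟩
      · rw [Matrix.mul_apply, Fin.sum_univ_two]
        simp
        rw [ih00, poly_scale B _ _ (M ^ (ε (m+1))) lam E00]
        ring
      · rw [Matrix.mul_apply, Fin.sum_univ_two]
        simp
        rw [ih00, ih01, poly_mix B _ _ _ ((M ^ (ε (m+1)))⁻¹) ((ε (m+1) : ℤ) : ℂ) lam E01]
        ring
      · rw [Matrix.mul_apply, Fin.sum_univ_two]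
        simp
        rw [ih10, poly_scale B _ _ (M ^ (ε (m+1))) lam E10]
        ring
      · rw [Matrix.mul_apply, Fin.sum_univ_two]
        simp
        rw [ih10, ih11, poly_shift B (fun k => S (m+1) (2*k) 0 (-1) ε M) (fun k => S m (2*k) 0 (-1) ε M) (fun k => S m (2*k+1) 0 (-1) ε M) ((M ^ (ε (m+1)))⁻¹) ((ε (m+1) : ℤ) : ℂ) lam E11a E11b htop]
        ring
    · -- Y step
      have hpar0 : (m + 1) % 2 = 0 := by omega
      rw [if_neg hpar, Ypow M hM0 lam (ε (m+1)) he]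
      have E00a : S (m+1) 0 1 1 ε M = M ^ (ε (m+1)) * S m 0 1 1 ε M := by
        rw [S_succ_ne m 0 1 1 ε M hM0 (Or.inl rfl)]
        simp only [pow_zero, one_mul]
      have E00b : ∀ k < B, S (m+1) (2*(k+1)) 1 1 ε M
          = M ^ (ε (m+1)) * S m (2*(k+1)) 1 1 ε M + ((ε (m+1) : ℤ) : ℂ) * S m (2*k+1) 1 1 ε M := by
        intro k _
        rw [show 2*(k+1) = (2*k+1)+1 by ring,
          S_succ_eq m (2*k+1) 1 1 ε M hM0 (by omega),
          Even.neg_one_pow (⟨k+1, by ring⟩ : Even (2*k+1+1))]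
        simp only [one_mul]
      have E01 : ∀ k ≤ B, S (m+1) (2*k+1) 1 1 ε M = (M ^ (ε (m+1)))⁻¹ * S m (2*k+1) 1 1 ε M := by
        intro k _
        rw [S_succ_ne m (2*k+1) 1 1 ε M hM0 (by omega),
          Odd.neg_one_pow (⟨k, by ring⟩ : Odd (2*k+1))]
        simp only [one_mul, neg_one_mul, zpow_neg]
      have E10 : ∀ k ≤ B, S (m+1) (2*k+1) 0 (-1) ε M
          = M ^ (ε (m+1)) * S m (2*k+1) 0 (-1) ε M + ((ε (m+1) : ℤ) : ℂ) * S m (2*k) 0 (-1) ε M := by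
        intro k _
        rw [S_succ_eq m (2*k) 0 (-1) ε M hM0 (by omega),
          Odd.neg_one_pow (⟨k, by ring⟩ : Odd (2*k+1))]
        simp only [neg_one_mul, neg_neg]
      have E11 : ∀ k ≤ B, S (m+1) (2*k) 0 (-1) ε M = (M ^ (ε (m+1)))⁻¹ * S m (2*k) 0 (-1) ε M := by
        intro k _
        rw [S_succ_ne m (2*k) 0 (-1) ε M hM0 (by omega),
          Even.neg_one_pow (⟨k, by ring⟩ : Even (2*k))]
        simp only [one_mul, neg_one_mul, zpow_neg]
      have htop : S m (2*B+1) 1 1 ε M = 0 := S_vanish _ _ _ _ (by omega)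
      refine ⟨?_, ?_, ?_, ?_⟩
      · rw [Matrix.mul_apply, Fin.sum_univ_two]
        simp
        rw [ih00, ih01, poly_shift B (fun k => S (m+1) (2*k) 1 1 ε M) (fun k => S m (2*k) 1 1 ε M) (fun k => S m (2*k+1) 1 1 ε M) (M ^ (ε (m+1))) ((ε (m+1) : ℤ) : ℂ) lam E00a E00b htop]
        ring
      · rw [Matrix.mul_apply, Fin.sum_univ_two]
        simp
        rw [ih01, poly_scale B _ _ ((M ^ (ε (m+1)))⁻¹) lam E01]
        ring
      · rw [Matrix.mul_apply, Fin.sum_univ_two]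
        simp
        rw [ih10, ih11, poly_mix B _ _ _ (M ^ (ε (m+1))) ((ε (m+1) : ℤ) : ℂ) lam E10]
        ring
      · rw [Matrix.mul_apply, Fin.sum_univ_two]
        simp
        rw [ih11, poly_scale B _ _ ((M ^ (ε (m+1)))⁻¹) lam E11]
        ring

lemma card_rev {k : ℕ} (P : Fin k → Prop) [DecidablePred P] :
    (Finset.univ.filter fun j : Fin k => P (Fin.rev j)).card
      = (Finset.univ.filter P).card := by
  apply Finset.card_nbij' (i := Fin.rev) (j := Fin.rev)
  · intro a ha
    simpa using (Finset.mem_filter.mp ha).2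
  · intro a ha
    simp only [Finset.mem_coe, Finset.mem_filter, Finset.mem_univ, true_and, Fin.rev_rev]
    exact (Finset.mem_filter.mp ha).2
  · intro a _; exact Fin.rev_rev a
  · intro a _; exact Fin.rev_rev a

lemma hatSum_rev (n : ℕ) (hn : n % 2 = 0) (ε : ℕ → ℤ)
    (hsym : ∀ i, 1 ≤ i → i ≤ n → ε i = ε (n+1-i)) {k : ℕ} (f : Fin k → ℕ)
    (hmono : ∀ j j' : Fin k, j < j' → f j < f j') (hb : ∀ j, 1 ≤ f j ∧ f j ≤ n)
    (hk : k % 2 = 1) :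
    hatSum n ε (fun j => n + 1 - f (Fin.rev j)) = - hatSum n ε f := by
  unfold hatSum
  rw [← Finset.sum_neg_distrib]
  apply Finset.sum_nbij' (i := fun t => n + 1 - t) (j := fun t => n + 1 - t)
  · intro t ht
    simp only [Finset.mem_Icc] at ht ⊢
    omega
  · intro t ht
    simp only [Finset.mem_Icc] at ht ⊢
    omega
  · intro t ht
    simp only [Finset.mem_Icc] at ht
    omega
  · intro t ht
    simp only [Finset.mem_Icc] at ht
    omega
  · intro t ht
    simp only [Finset.mem_Icc] at ht
    have hex : (∃ j : Fin k, n + 1 - f (Fin.rev j) = t) ↔ (∃ j : Fin k, f j = n + 1 - t) := by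
      constructor
      · rintro ⟨j, hj⟩
        refine ⟨Fin.rev j, ?_⟩
        have := hb (Fin.rev j)
        omega
      · rintro ⟨j, hj⟩
        refine ⟨Fin.rev j, ?_⟩
        rw [Fin.rev_rev]
        have := hb j
        omega
    by_cases hc : ∃ j : Fin k, f j = n + 1 - t
    · rw [if_pos (hex.mpr hc), if_pos hc, neg_zero]
    · rw [if_neg (fun hh => hc (hex.mp hh)), if_neg hc]
      have hflt : ∀ j : Fin k, (n + 1 - f (Fin.rev j) < t) ↔ (n + 1 - t < f (Fin.rev j)) := by
        intro j
        have h1 := hb (Fin.rev j)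
        have h2 : f (Fin.rev j) ≠ n + 1 - t := fun hh => hc ⟨Fin.rev j, hh⟩
        omega
      have hcard1 : (Finset.univ.filter fun j : Fin k => n + 1 - f (Fin.rev j) < t).card
          = (Finset.univ.filter fun j : Fin k => n + 1 - t < f j).card := by
        rw [Finset.filter_congr (fun j _ => by rw [hflt j])]
        exact card_rev (fun j => n + 1 - t < f j)
      have hcard2 : (Finset.univ.filter fun j : Fin k => n + 1 - t < f j).card
          + (Finset.univ.filter fun j : Fin k => f j < n + 1 - t).card = k := by
        have hsplit := Finset.card_filter_add_card_filter_not
          (s := (Finset.univ : Finset (Fin k))) (p := fun j : Fin k => n + 1 - t < f j)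
        rw [Finset.card_univ, Fintype.card_fin] at hsplit
        have heq : (Finset.univ.filter fun j : Fin k => f j < n + 1 - t)
            = (Finset.univ.filter fun j : Fin k => ¬ (n + 1 - t < f j)) := by
          apply Finset.filter_congr
          intro j _
          have h1 := hb j
          have h2 : f j ≠ n + 1 - t := fun hh => hc ⟨j, hh⟩
          constructor
          · intro _; omega
          · intro _; omega
        rw [heq]
        exact hsplit
      have hεt : ε t = ε (n + 1 - (n + 1 - t)) := by
        rw [show n + 1 - (n + 1 - t) = t by omega]
      have hε2 : ε (n + 1 - t) = ε t := by
        rw [hsym (n + 1 - t) (by omega) (by omega), show n + 1 - (n + 1 - t) = t by omega]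
      rw [hcard1, hε2.symm]
      set c := (Finset.univ.filter fun j : Fin k => f j < n + 1 - t).card with hc1
      have hck : c ≤ k := by
        rw [hc1]; exact le_trans (Finset.card_filter_le _ _) (by simp)
      have : (Finset.univ.filter fun j : Fin k => n + 1 - t < f j).card = k - c := by omega
      rw [this]
      have hpow : ((-1 : ℤ)) ^ (k - c) = -((-1 : ℤ)) ^ c := by
        rcases Nat.even_or_odd c with hcev | hcod
        · rw [hcev.neg_one_pow]
          have : Odd (k - c) := by
            rcases hcev with ⟨r, hr⟩
            exact ⟨(k - c - 1)/2, by omega⟩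
          rw [this.neg_one_pow]
          try norm_num
        · rw [hcod.neg_one_pow]
          have : Even (k - c) := by
            rcases hcod with ⟨r, hr⟩
            exact ⟨(k - c)/2, by omega⟩
          rw [this.neg_one_pow]
          try norm_num
      rw [hpow]
      ring

lemma adm_rev {n k start : ℕ} (hn : n % 2 = 0) (hst : start ≤ 1) {f : Fin (2*k+1) → ℕ}
    (h : Adm n (2*k+1) start f) :
    Adm n (2*k+1) (1 - start) (fun j => n + 1 - f (Fin.rev j)) := by
  refine ⟨?_, ?_, ?_⟩
  · intro j j' hjj
    have hr : Fin.rev j' < Fin.rev j := by rwa [Fin.rev_lt_rev]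
    have h1 := h.1 _ _ hr
    have b1 := (h.2.1 (Fin.rev j)).2
    simp only []
    omega
  · intro j
    have := h.2.1 (Fin.rev j)
    simp only []
    omega
  · intro j
    have hp := h.2.2 (Fin.rev j)
    have hb := (h.2.1 (Fin.rev j)).1
    have hb2 := (h.2.1 (Fin.rev j)).2
    have hrv : (Fin.rev j).val = 2*k + 1 - (j.val + 1) := Fin.val_rev j
    have hj := j.isLt
    simp only []
    rw [hrv] at hp
    omega

lemma S_rev (n k : ℕ) (hn : n % 2 = 0) (ε : ℕ → ℤ)
    (hsym : ∀ i, 1 ≤ i → i ≤ n → ε i = ε (n+1-i)) (M : ℂ) :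
    S n (2*k+1) 0 (-1) ε M = S n (2*k+1) 1 1 ε M := by
  have hn1 : 0 < n + 1 := by omega
  unfold S
  rw [← Finset.sum_filter, ← Finset.sum_filter]
  apply Finset.sum_nbij'
    (i := fun (f : Fin (2*k+1) → Fin (n+1)) (j : Fin (2*k+1)) =>
      (⟨(n + 1 - (f (Fin.rev j) : ℕ)) % (n+1), Nat.mod_lt _ hn1⟩ : Fin (n+1)))
    (j := fun (f : Fin (2*k+1) → Fin (n+1)) (j : Fin (2*k+1)) =>
      (⟨(n + 1 - (f (Fin.rev j) : ℕ)) % (n+1), Nat.mod_lt _ hn1⟩ : Fin (n+1)))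
  · intro f hf
    rw [Finset.mem_filter] at hf ⊢
    obtain ⟨-, ha⟩ := hf
    refine ⟨Finset.mem_univ _, ?_⟩
    have hco : ∀ j : Fin (2*k+1),
        (n + 1 - (f (Fin.rev j) : ℕ)) % (n+1) = n + 1 - ((f (Fin.rev j)) : ℕ) := by
      intro j
      have h1 : 1 ≤ (f (Fin.rev j) : ℕ) ∧ (f (Fin.rev j) : ℕ) ≤ n := ha.2.1 (Fin.rev j)
      exact Nat.mod_eq_of_lt (by omega)
    simp only [hco]
    exact adm_rev hn (by omega) ha
  · intro f hf
    rw [Finset.mem_filter] at hf ⊢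
    obtain ⟨-, ha⟩ := hf
    refine ⟨Finset.mem_univ _, ?_⟩
    have hco : ∀ j : Fin (2*k+1),
        (n + 1 - (f (Fin.rev j) : ℕ)) % (n+1) = n + 1 - ((f (Fin.rev j)) : ℕ) := by
      intro j
      have h1 : 1 ≤ (f (Fin.rev j) : ℕ) ∧ (f (Fin.rev j) : ℕ) ≤ n := ha.2.1 (Fin.rev j)
      exact Nat.mod_eq_of_lt (by omega)
    simp only [hco]
    exact adm_rev hn (by omega) ha
  · intro f hf
    rw [Finset.mem_filter] at hf
    obtain ⟨-, ha⟩ := hf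
    funext j
    ext
    simp only [Fin.rev_rev]
    have h1 : 1 ≤ (f j : ℕ) ∧ (f j : ℕ) ≤ n := ha.2.1 j
    have e1 : (n + 1 - (f j : ℕ)) % (n + 1) = n + 1 - (f j : ℕ) := Nat.mod_eq_of_lt (by omega)
    rw [e1]
    have e2 : (n + 1 - (n + 1 - (f j : ℕ))) % (n + 1) = n + 1 - (n + 1 - (f j : ℕ)) :=
      Nat.mod_eq_of_lt (by omega)
    rw [e2]
    omega
  · intro f hf
    rw [Finset.mem_filter] at hf
    obtain ⟨-, ha⟩ := hf
    funext j
    ext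
    simp only [Fin.rev_rev]
    have h1 : 1 ≤ (f j : ℕ) ∧ (f j : ℕ) ≤ n := ha.2.1 j
    have e1 : (n + 1 - (f j : ℕ)) % (n + 1) = n + 1 - (f j : ℕ) := Nat.mod_eq_of_lt (by omega)
    rw [e1]
    have e2 : (n + 1 - (n + 1 - (f j : ℕ))) % (n + 1) = n + 1 - (n + 1 - (f j : ℕ)) :=
      Nat.mod_eq_of_lt (by omega)
    rw [e2]
    omega
  · intro f hf
    rw [Finset.mem_filter] at hf
    obtain ⟨-, ha⟩ := hf
    have hco : ∀ j : Fin (2*k+1),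
        (n + 1 - (f (Fin.rev j) : ℕ)) % (n+1) = n + 1 - ((f (Fin.rev j)) : ℕ) := by
      intro j
      have h1 : 1 ≤ (f (Fin.rev j) : ℕ) ∧ (f (Fin.rev j) : ℕ) ≤ n := ha.2.1 (Fin.rev j)
      exact Nat.mod_eq_of_lt (by omega)
    simp only [hco]
    have hhat : hatSum n ε (fun j => n + 1 - ((f (Fin.rev j)) : ℕ)) =
        - hatSum n ε (fun j => (f j : ℕ)) :=
      hatSum_rev n hn ε hsym _ ha.1 ha.2.1 (by omega)
    rw [hhat]
    have hprod : (∏ j : Fin (2*k+1), (ε (n + 1 - ((f (Fin.rev j)) : ℕ)) : ℂ))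
        = ∏ j : Fin (2*k+1), (ε ((f j : ℕ)) : ℂ) := by
      rw [Fintype.prod_equiv Fin.revPerm
        (fun j => (ε (n + 1 - ((f (Fin.rev j)) : ℕ)) : ℂ))
        (fun j => (ε (n + 1 - ((f j) : ℕ)) : ℂ)) (fun j => rfl)]
      apply Finset.prod_congr rfl
      intro j _
      have hb : 1 ≤ (f j : ℕ) ∧ (f j : ℕ) ≤ n := ha.2.1 j
      rw [← hsym _ hb.1 hb.2]
    rw [hprod]
    congr 1
    rw [show (1 : ℤ) * -hatSum n ε (fun j => ((f j : ℕ))) = -1 * hatSum n ε (fun j => ((f j : ℕ))) by ring]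

lemma S_full_zero (n : ℕ) (hn : 1 ≤ n) (σ : ℤ) (ε : ℕ → ℤ) (M : ℂ) :
    S n n 0 σ ε M = 0 := by
  unfold S
  apply Finset.sum_eq_zero
  intro i _
  rw [if_neg]
  intro hadm
  have key : ∀ v (hv : v < n), (i ⟨0, by omega⟩ : ℕ) + v ≤ (i ⟨v, hv⟩ : ℕ) := by
    intro v
    induction v with
    | zero => intro hv; simp
    | succ w ih =>
      intro hv
      have hw : w < n := by omega
      have h2 : (i ⟨w, hw⟩ : ℕ) < (i ⟨w+1, hv⟩ : ℕ) := hadm.1 ⟨w, hw⟩ ⟨w+1, hv⟩ (by simp)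
      have h3 := ih hw
      omega
  have hp0 : (i ⟨0, by omega⟩ : ℕ) % 2 = 0 := by
    have := hadm.2.2 ⟨0, by omega⟩
    simpa using this
  have hb0 : 1 ≤ (i ⟨0, by omega⟩ : ℕ) := (hadm.2.1 ⟨0, by omega⟩).1
  have hkey := key (n-1) (by omega)
  have hbt : (i ⟨n-1, by omega⟩ : ℕ) ≤ n := (hadm.2.1 ⟨n-1, by omega⟩).2
  omega

lemma cP_eq (n k : ℕ) (ε : ℕ → ℤ) (M : ℂ) : cP n k ε M = S n k 1 1 ε M := by
  unfold cP S
  simp only [one_mul]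

lemma dP_eq (n k : ℕ) (ε : ℕ → ℤ) (M : ℂ) : dP n k ε M = S n k 0 (-1) ε M := by
  unfold dP S
  simp only [neg_one_mul]

/-- explicit formula for the entries of `W`.
With `X = [[M,1],[0,M⁻¹]]`, `Y = [[M,0],[λ,M⁻¹]]` and
`W = X^{ε₁} Y^{ε₂} ⋯ X^{ε_{α−2}} Y^{ε_{α−1}}`:
`W₁₁ = Σ_{k=0}^{(α−1)/2} c_{2k}^{α−1} λᵏ`, `W₁₂ = Σ_{k=0}^{(α−3)/2} c_{2k+1}^{α−1} λᵏ`,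
`W₂₁ = λ·Σ_{k=0}^{(α−3)/2} d_{2k+1}^{α−1} λᵏ = λ·W₁₂`, and
`W₂₂ = Σ_{k=0}^{(α−3)/2} d_{2k}^{α−1} λᵏ`. -/
theorem Wword_entries (M : ℂ) (hM0 : M ≠ 0) (hM1 : M ≠ 1) (hMneg1 : M ≠ -1)
    (lam : ℂ) (α : ℕ) (hodd : Odd α) (hα : 3 ≤ α) (ε : ℕ → ℤ)
    (hε : ∀ i, 1 ≤ i → i ≤ α - 1 → ε i = 1 ∨ ε i = -1)
    (hsym : ∀ i, 1 ≤ i → i ≤ α - 1 → ε i = ε (α - i))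
    (W : Mat) (hW : W = Wword α ε !![M, 1; 0, M⁻¹] !![M, 0; lam, M⁻¹]) :
    W 0 0 = ∑ k ∈ Finset.range ((α - 1) / 2 + 1), cP (α - 1) (2 * k) ε M * lam ^ k ∧
    W 0 1 = ∑ k ∈ Finset.range ((α - 3) / 2 + 1), cP (α - 1) (2 * k + 1) ε M * lam ^ k ∧
    W 1 0 = lam * ∑ k ∈ Finset.range ((α - 3) / 2 + 1), dP (α - 1) (2 * k + 1) ε M * lam ^ k ∧
    W 1 0 = lam * W 0 1 ∧
    W 1 1 = ∑ k ∈ Finset.range ((α - 3) / 2 + 1), dP (α - 1) (2 * k) ε M * lam ^ k := by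
  obtain ⟨a, rfl⟩ := hodd
  have ha : 1 ≤ a := by omega
  have hN : 2*a+1 - 1 = 2*a := by omega
  have e1 : (2*a+1 - 1)/2 + 1 = a + 1 := by omega
  have e2 : (2*a+1 - 3)/2 + 1 = a := by omega
  rw [e1, e2, hN]
  have hWp : Wword (2*a+1) ε !![M, 1; 0, M⁻¹] !![M, 0; lam, M⁻¹]
      = Wp ε !![M, 1; 0, M⁻¹] !![M, 0; lam, M⁻¹] (2*a) := by
    unfold Wword Wp
    rw [hN]
  obtain ⟨m00, m01, m10, m11⟩ :=
    master M hM0 lam ε (2*a) (2*a+1) (by omega)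
      (fun i h1 h2 => hε i h1 (by omega)) (2*a) le_rfl
  have hred : ∀ (g : ℕ → ℂ) (c : ℕ), (∀ k, c ≤ k → k < 2*a+1+1 → g k = 0) → c ≤ 2*a+1+1 →
      ∑ k ∈ Finset.range (2*a+1+1), g k * lam^k = ∑ k ∈ Finset.range c, g k * lam^k := by
    intro g c hv hc
    rw [← Finset.sum_subset (Finset.range_subset_range.mpr hc)]
    intro x hx hxn
    rw [Finset.mem_range] at hx
    rw [Finset.mem_range] at hxn
    rw [hv x (by omega) hx, zero_mul]
  have hsym' : ∀ i, 1 ≤ i → i ≤ 2*a → ε i = ε (2*a + 1 - i) := by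
    intro i h1 h2
    have := hsym i h1 (by omega)
    rw [this]
  refine ⟨?_, ?_, ?_, ?_, ?_⟩
  · rw [hW, hWp, m00,
      hred (fun k => S (2*a) (2*k) 1 1 ε M) (a+1)
        (fun k hk _ => S_vanish 1 1 ε M (by omega)) (by omega)]
    exact Finset.sum_congr rfl fun k _ => by rw [cP_eq]
  · rw [hW, hWp, m01,
      hred (fun k => S (2*a) (2*k+1) 1 1 ε M) a
        (fun k hk _ => S_vanish 1 1 ε M (by omega)) (by omega)]
    exact Finset.sum_congr rfl fun k _ => by rw [cP_eq]
  · rw [hW, hWp, m10,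
      hred (fun k => S (2*a) (2*k+1) 0 (-1) ε M) a
        (fun k hk _ => S_vanish 0 (-1) ε M (by omega)) (by omega)]
    exact congrArg _ (Finset.sum_congr rfl fun k _ => by rw [dP_eq])
  · rw [hW, hWp, m10, m01]
    refine congrArg _ (Finset.sum_congr rfl fun k _ => ?_)
    rw [S_rev (2*a) k (by omega) ε hsym' M]
  · rw [hW, hWp, m11,
      hred (fun k => S (2*a) (2*k) 0 (-1) ε M) a ?_ (by omega)]
    · exact Finset.sum_congr rfl fun k _ => by rw [dP_eq]
    · intro k hk hk2
      rcases eq_or_lt_of_le hk with heq | hlt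
      · subst heq
        exact S_full_zero (2*a) (by omega) (-1) ε M
      · exact S_vanish 0 (-1) ε M (by omega)
end

section
/- For every l ≥ 1, every ε ∈ {1,−1}^{2l} (no symmetry assumed), and all M ∈ ℂ \ {0}, λ ∈ ℂ, with z = M − M⁻¹ and λ̃ = λ + z²: (i) Σ_{k=0}^{l−1} c̃_{2k+1}^{2l}(M,ε)·λ̃ᵏ = Σ_{k=0}^{l−1} c_{2k+1}^{2l}(M,ε)·λᵏ; (ii) Σ_{k=0}^{l−1} d̃_{2k+1}^{2l}(M,ε)·λ̃ᵏ = Σ_{k=0}^{l−1} d_{2k+1}^{2l}(M⁻¹,ε)·λᵏ; (iii) Σ_{k=0}^{l} c̃_{2k}^{2l}(M,ε)·λ̃ᵏ = Σ_{k=0}^{l} (c_{2k}^{2l}(M,ε) − z·c_{2k+1}^{2l}(M,ε))·λᵏ, where c_{2l+1}^{2l} = 0. -/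
open Finset

noncomputable def GG (n k start : ℕ) (v : ℕ → ℂ) (w : ℕ → ℕ → ℂ) : ℂ :=
  ∑ i : Fin k → Fin (n + 1),
    if Adm n k start (fun j => (i j : ℕ))
    then (∏ j : Fin k, v (i j : ℕ)) *
      ∏ t ∈ Finset.Icc 1 n,
        (if ∃ j, (i j : ℕ) = t then 1
         else w t ((Finset.univ.filter fun j : Fin k => (i j : ℕ) < t).card))
    else 0

lemma zpow_fs (M : ℂ) (hM : M ≠ 0) (s : Finset ℕ) (f : ℕ → ℤ) :
    M ^ (∑ t ∈ s, f t) = ∏ t ∈ s, M ^ f t := by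
  classical
  induction s using Finset.induction with
  | empty => simp
  | insert a s h ih => rw [Finset.sum_insert h, Finset.prod_insert h, zpow_add₀ hM, ih]

lemma Adm.lt_val {n k start : ℕ} {f : Fin k → ℕ} (h : Adm n k start f) :
    ∀ j : Fin k, j.val < f j := by
  obtain ⟨hmono, hbd, -⟩ := h
  have key : ∀ r (hr : r < k), r < f ⟨r, hr⟩ := by
    intro r
    induction r with
    | zero => intro hr; exact (hbd _).1
    | succ r ih =>
        intro hr
        have h1 := ih (by omega)
        have h2 := hmono ⟨r, by omega⟩ ⟨r + 1, hr⟩ (by simp [Fin.lt_def])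
        omega
  intro j
  have := key j.val j.isLt
  simpa using this

lemma GG_vanish (n k start : ℕ) (v : ℕ → ℂ) (w : ℕ → ℕ → ℂ) (h : n < k) :
    GG n k start v w = 0 := by
  unfold GG
  refine Finset.sum_eq_zero fun i _ => ?_
  rw [if_neg]
  intro hA
  have h1 := hA.lt_val ⟨k - 1, by omega⟩
  have h2 := (hA.2.1 ⟨k - 1, by omega⟩).2
  simp only at h1 h2
  omega

lemma GG_zero (n start : ℕ) (v : ℕ → ℂ) (w : ℕ → ℕ → ℂ) :
    GG n 0 start v w = ∏ t ∈ Finset.Icc 1 n, w t 0 := by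
  unfold GG
  rw [Fintype.sum_unique]
  split
  case isFalse h => exact absurd ⟨fun j => j.elim0, fun j => j.elim0, fun j => j.elim0⟩ h
  case isTrue h =>
    simp

lemma card_aux {n k start t : ℕ} {i : Fin k → ℕ} (hA : Adm n k start i)
    (ht : t ∈ Finset.Icc 1 n) (hnc : ¬∃ j, i j = t) :
    ((Finset.Icc 1 t).filter fun s => ¬∃ j, i j = s).card
      + (Finset.univ.filter fun j : Fin k => i j < t).card = t := by
  classical
  have hinj : Function.Injective i := by
    intro a b hab
    rcases lt_trichotomy a b with h | h | h
    · exact absurd (hA.1 a b h) (by omega)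
    · exact h
    · exact absurd (hA.1 b a h) (by omega)
  have himg : (Finset.Icc 1 t).filter (fun s => ∃ j, i j = s)
      = Finset.image i (Finset.univ.filter fun j => i j < t) := by
    ext s
    simp only [Finset.mem_filter, Finset.mem_Icc, Finset.mem_image, Finset.mem_univ, true_and]
    constructor
    · rintro ⟨⟨h1, h2⟩, j, rfl⟩
      exact ⟨j, by push_neg at hnc; have := hnc j; omega, rfl⟩
    · rintro ⟨j, hj, rfl⟩
      exact ⟨⟨(hA.2.1 j).1, by omega⟩, j, rfl⟩
  have h1 : ((Finset.Icc 1 t).filter fun s => ∃ j, i j = s).card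
      = (Finset.univ.filter fun j : Fin k => i j < t).card := by
    rw [himg, Finset.card_image_of_injective _ hinj]
  have h2 := Finset.card_filter_add_card_filter_not
    (s := Finset.Icc 1 t) (p := fun s => ∃ j, i j = s)
  rw [Nat.card_Icc] at h2
  omega

lemma cP_eq_s6 (n k : ℕ) (ε : ℕ → ℤ) (M : ℂ) (hM : M ≠ 0) :
    cP n k ε M = GG n k 1 (fun t => (ε t : ℂ)) (fun t c => M ^ ((-1 : ℤ) ^ c * ε t)) := by
  unfold cP GG
  refine Finset.sum_congr rfl fun i _ => ?_
  by_cases hA : Adm n k 1 (fun j => ((i j : ℕ)))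
  · simp only [hA, if_true]
    congr 1
    rw [hatSum, zpow_fs M hM]
    refine Finset.prod_congr rfl fun t ht => ?_
    by_cases hc : ∃ j, (i j : ℕ) = t
    · simp only [hc, if_true, zpow_zero]
    · simp only [hc, if_false]
  · simp only [hA, if_false]

lemma dP_eq_s6 (n k : ℕ) (ε : ℕ → ℤ) (M : ℂ) (hM : M ≠ 0) :
    dP n k ε M = GG n k 0 (fun t => (ε t : ℂ)) (fun t c => M ^ (-((-1 : ℤ) ^ c * ε t))) := by
  unfold dP GG
  refine Finset.sum_congr rfl fun i _ => ?_
  by_cases hA : Adm n k 0 (fun j => ((i j : ℕ)))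
  · simp only [hA, if_true]
    congr 1
    rw [hatSum, ← Finset.sum_neg_distrib, zpow_fs M hM]
    refine Finset.prod_congr rfl fun t ht => ?_
    by_cases hc : ∃ j, (i j : ℕ) = t
    · simp only [hc, if_true, neg_zero, zpow_zero]
    · simp only [hc, if_false]
  · simp only [hA, if_false]

lemma neg_one_pow_shift {a c : ℕ} (h : a + c = c + a) : True := trivial

lemma cT_eq (n k : ℕ) (ε : ℕ → ℤ) (M : ℂ) (hM : M ≠ 0) :
    cT n k ε M = GG n k 1 (fun t => (ε t : ℂ)) (fun t c => M ^ ((-1 : ℤ) ^ (t + c) * ε t)) := by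
  unfold cT GG
  refine Finset.sum_congr rfl fun i _ => ?_
  by_cases hA : Adm n k 1 (fun j => ((i j : ℕ)))
  · simp only [hA, if_true]
    congr 1
    rw [hatAltSum, zpow_fs M hM]
    refine Finset.prod_congr rfl fun t ht => ?_
    by_cases hc : ∃ j, (i j : ℕ) = t
    · simp only [hc, if_true, zpow_zero]
    · simp only [hc, if_false]
      congr 2
      have hAc := card_aux hA ht hc
      set A := ((Finset.Icc 1 t).filter fun s => ¬∃ j, (i j : ℕ) = s).card
      set c := (Finset.univ.filter fun j : Fin k => (i j : ℕ) < t).card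
      calc (-1 : ℤ) ^ A = (-1) ^ A * ((-1) ^ 2) ^ c := by norm_num
        _ = (-1) ^ (A + 2 * c) := by rw [pow_add, pow_mul]
        _ = (-1) ^ (t + c) := by rw [show A + 2 * c = t + c by omega]
  · simp only [hA, if_false]

lemma dT_eq (n k : ℕ) (ε : ℕ → ℤ) (M : ℂ) (hM : M ≠ 0) :
    dT n k ε M = GG n k 0 (fun t => (ε t : ℂ)) (fun t c => M ^ (-((-1 : ℤ) ^ (t + c) * ε t))) := by
  unfold dT GG
  refine Finset.sum_congr rfl fun i _ => ?_
  by_cases hA : Adm n k 0 (fun j => ((i j : ℕ)))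
  · simp only [hA, if_true]
    congr 1
    rw [hatAltSum, ← Finset.sum_neg_distrib, zpow_fs M hM]
    refine Finset.prod_congr rfl fun t ht => ?_
    by_cases hc : ∃ j, (i j : ℕ) = t
    · simp only [hc, if_true, neg_zero, zpow_zero]
    · simp only [hc, if_false]
      congr 2
      have hAc := card_aux hA ht hc
      set A := ((Finset.Icc 1 t).filter fun s => ¬∃ j, (i j : ℕ) = s).card
      set c := (Finset.univ.filter fun j : Fin k => (i j : ℕ) < t).card
      have : (-1 : ℤ) ^ A = (-1) ^ (t + c) := by
        calc (-1 : ℤ) ^ A = (-1) ^ A * ((-1) ^ 2) ^ c := by norm_num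
          _ = (-1) ^ (A + 2 * c) := by rw [pow_add, pow_mul]
          _ = (-1) ^ (t + c) := by rw [show A + 2 * c = t + c by omega]
      rw [this]
  · simp only [hA, if_false]

noncomputable def TermF (n k start : ℕ) (v : ℕ → ℂ) (w : ℕ → ℕ → ℂ)
    (i : Fin k → Fin (n + 1)) : ℂ :=
  if Adm n k start (fun j => (i j : ℕ))
  then (∏ j : Fin k, v (i j : ℕ)) *
    ∏ t ∈ Finset.Icc 1 n,
      (if ∃ j, (i j : ℕ) = t then 1
       else w t ((Finset.univ.filter fun j : Fin k => (i j : ℕ) < t).card))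
  else 0

lemma GG_eq_sum (n k start : ℕ) (v : ℕ → ℂ) (w : ℕ → ℕ → ℂ) :
    GG n k start v w = ∑ i : Fin k → Fin (n + 1), TermF n k start v w i := rfl

lemma sum_restrict {k n : ℕ} (F : (Fin k → Fin (n + 2)) → ℂ)
    (hF : ∀ g, (∃ j, g j = Fin.last (n + 1)) → F g = 0) :
    ∑ g : Fin k → Fin (n + 2), F g
      = ∑ g : Fin k → Fin (n + 1), F (fun j => (g j).castSucc) := by
  classical
  have hinj : Function.Injective
      (fun (g : Fin k → Fin (n + 1)) (j : Fin k) => (g j).castSucc) := by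
    intro a b hab
    funext j
    exact Fin.castSucc_injective _ (congrFun hab j)
  calc ∑ g : Fin k → Fin (n + 2), F g
      = ∑ g ∈ Finset.univ.map ⟨_, hinj⟩, F g := by
        refine (Finset.sum_subset (Finset.subset_univ _) fun x _ hx => ?_).symm
        refine hF x ?_
        by_contra hc
        push_neg at hc
        refine hx ?_
        rw [Finset.mem_map]
        refine ⟨fun j => ⟨(x j).val, ?_⟩, Finset.mem_univ _, ?_⟩
        · have h1 := (x j).isLt
          have h2 : (x j).val ≠ n + 1 := fun h => hc j (Fin.ext (by simpa using h))
          omega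
        · funext j
          exact Fin.ext (by simp [Fin.castSucc])
    _ = ∑ g : Fin k → Fin (n + 1), F (fun j => (g j).castSucc) := Finset.sum_map _ _ _

lemma TermF_zero (n k start : ℕ) (v : ℕ → ℂ) (w : ℕ → ℕ → ℂ)
    (i : Fin (k + 1) → Fin (n + 2)) (hj : ∃ j : Fin k, i j.castSucc = Fin.last (n + 1)) :
    TermF (n + 1) (k + 1) start v w i = 0 := by
  obtain ⟨j, hj⟩ := hj
  unfold TermF
  rw [if_neg]
  rintro ⟨a, b, -⟩
  have h1 := a j.castSucc (Fin.last k) (Fin.castSucc_lt_last j)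
  have h2 := (b (Fin.last k)).2
  simp only [hj, Fin.val_last] at h1
  omega

lemma TermF_castSucc (n k start : ℕ) (v : ℕ → ℂ) (w : ℕ → ℕ → ℂ)
    (i : Fin (k + 1) → Fin (n + 1)) :
    TermF (n + 1) (k + 1) start v w (fun j => (i j).castSucc)
      = w (n + 1) (k + 1) * TermF n (k + 1) start v w i := by
  unfold TermF
  simp only [Fin.coe_castSucc]
  have hAdm : Adm (n + 1) (k + 1) start (fun j => (i j : ℕ))
      ↔ Adm n (k + 1) start (fun j => (i j : ℕ)) := by
    unfold Adm
    constructor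
    · rintro ⟨a, b, c⟩
      exact ⟨a, fun j => ⟨(b j).1, Nat.lt_succ_iff.mp (i j).isLt⟩, c⟩
    · rintro ⟨a, b, c⟩
      exact ⟨a, fun j => ⟨(b j).1, le_trans (b j).2 (Nat.le_succ n)⟩, c⟩
  by_cases hA : Adm n (k + 1) start (fun j => (i j : ℕ))
  · rw [if_pos (hAdm.mpr hA), if_pos hA]
    rw [Finset.prod_Icc_succ_top (by omega : 1 ≤ n + 1)]
    have hne : ¬∃ j, (i j : ℕ) = n + 1 := by
      rintro ⟨j, hj⟩; have := (i j).isLt; omega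
    rw [if_neg hne]
    have hflt : (Finset.univ.filter fun j : Fin (k + 1) => (i j : ℕ) < n + 1)
        = Finset.univ := Finset.filter_true_of_mem fun j _ => (i j).isLt
    rw [hflt, Finset.card_univ, Fintype.card_fin]
    ring
  · rw [if_neg (fun h => hA (hAdm.mp h)), if_neg hA, mul_zero]

lemma TermF_snoc (n k start : ℕ) (v : ℕ → ℂ) (w : ℕ → ℕ → ℂ) (g : Fin k → Fin (n + 1)) :
    TermF (n + 1) (k + 1) start v w
        (Fin.snoc (fun j => (g j).castSucc) (Fin.last (n + 1)))
      = if (n + 1) % 2 = (k + start) % 2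
        then v (n + 1) * TermF n k start v w g else 0 := by
  classical
  set F : Fin (k + 1) → Fin (n + 2) :=
    Fin.snoc (fun j => (g j).castSucc) (Fin.last (n + 1)) with hF
  have hvc : ∀ j : Fin k, (F j.castSucc : ℕ) = (g j : ℕ) := by
    intro j; rw [hF, Fin.snoc_castSucc]; simp
  have hv : ∀ (j : Fin (k + 1)) (hj : j.val < k), (F j : ℕ) = (g ⟨j.val, hj⟩ : ℕ) := by
    intro j hj
    have hje : j = Fin.castSucc ⟨j.val, hj⟩ := Fin.ext (by simp)
    have h2 := hvc ⟨j.val, hj⟩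
    rwa [← hje] at h2
  have hvl : ∀ (j : Fin (k + 1)), j.val = k → (F j : ℕ) = n + 1 := by
    intro j hj
    have hje : j = Fin.last k := Fin.ext (by simpa using hj)
    rw [hje, hF, Fin.snoc_last]; simp
  have hAdm : Adm (n + 1) (k + 1) start (fun j => (F j : ℕ))
      ↔ (Adm n k start (fun j => (g j : ℕ)) ∧ (n + 1) % 2 = (k + start) % 2) := by
    constructor
    · rintro ⟨a, b, c⟩
      refine ⟨⟨?_, ?_, ?_⟩, ?_⟩
      · intro j j' hlt
        have h1 := a j.castSucc j'.castSucc (Fin.castSucc_lt_castSucc_iff.mpr hlt)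
        simpa only [hvc] using h1
      · intro j
        exact ⟨by have := (b j.castSucc).1; simpa only [hvc] using this,
          Nat.lt_succ_iff.mp (g j).isLt⟩
      · intro j
        have := c j.castSucc
        simpa only [hvc, Fin.coe_castSucc] using this
      · have := c (Fin.last k)
        simpa only [hvl (Fin.last k) (by simp), Fin.val_last] using this
    · rintro ⟨⟨a, b, c⟩, hp⟩
      refine ⟨?_, ?_, ?_⟩
      · intro j j' hlt
        simp only []
        by_cases hj' : j'.val < k
        · have hj : j.val < k := by have := Fin.lt_def.mp hlt; omega
          rw [hv j hj, hv j' hj']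
          exact a _ _ (Fin.mk_lt_mk.mpr (Fin.lt_def.mp hlt))
        · have hj'k : j'.val = k := by have := j'.isLt; omega
          have hj : j.val < k := by have := Fin.lt_def.mp hlt; omega
          rw [hv j hj, hvl j' hj'k]
          exact (g _).isLt
      · intro j
        simp only []
        by_cases hj : j.val < k
        · rw [hv j hj]
          exact ⟨(b _).1, le_trans (b _).2 (Nat.le_succ n)⟩
        · have hjk : j.val = k := by have := j.isLt; omega
          rw [hvl j hjk]
          exact ⟨by omega, le_refl _⟩
      · intro j
        simp only []
        by_cases hj : j.val < k
        · rw [hv j hj]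
          have := c ⟨j.val, hj⟩
          simpa using this
        · have hjk : j.val = k := by have := j.isLt; omega
          rw [hvl j hjk, hjk]
          exact hp
  by_cases hA : Adm n k start (fun j => (g j : ℕ))
  · by_cases hp : (n + 1) % 2 = (k + start) % 2
    · unfold TermF
      rw [if_pos (hAdm.mpr ⟨hA, hp⟩), if_pos hp, if_pos hA]
      rw [Fin.prod_univ_castSucc, Finset.prod_Icc_succ_top (show 1 ≤ n + 1 by omega)]
      have hchosen : ∃ j : Fin (k + 1), (F j : ℕ) = n + 1 := ⟨Fin.last k, hvl _ (by simp)⟩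
      rw [if_pos hchosen]
      have hprod : (∏ t ∈ Finset.Icc 1 n,
            if ∃ j, (F j : ℕ) = t then 1
            else w t ((Finset.univ.filter fun j : Fin (k + 1) => (F j : ℕ) < t).card))
          = ∏ t ∈ Finset.Icc 1 n,
            if ∃ j, (g j : ℕ) = t then 1
            else w t ((Finset.univ.filter fun j : Fin k => (g j : ℕ) < t).card) := by
        refine Finset.prod_congr rfl fun t ht => ?_
        have htn : t ≤ n := (Finset.mem_Icc.mp ht).2
        have hex : (∃ j : Fin (k + 1), (F j : ℕ) = t) ↔ (∃ j : Fin k, (g j : ℕ) = t) := by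
          constructor
          · rintro ⟨j, hj⟩
            by_cases hjk : j.val < k
            · exact ⟨⟨j.val, hjk⟩, by rw [← hv j hjk]; exact hj⟩
            · rw [hvl j (by have := j.isLt; omega)] at hj; omega
          · rintro ⟨j, hj⟩
            exact ⟨j.castSucc, by rw [hvc j]; exact hj⟩
        by_cases hex2 : ∃ j : Fin k, (g j : ℕ) = t
        · rw [if_pos (hex.mpr hex2), if_pos hex2]
        · rw [if_neg (fun h => hex2 (hex.mp h)), if_neg hex2]
          congr 1
          rw [Finset.card_filter, Finset.card_filter, Fin.sum_univ_castSucc]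
          simp only [hvc, hvl (Fin.last k) (by simp)]
          rw [if_neg (by omega)]
          simp
      rw [hprod]
      have hvlast : v (F (Fin.last k) : ℕ) = v (n + 1) := by rw [hvl _ (by simp)]
      have hvall : (∏ j : Fin k, v (F j.castSucc : ℕ)) = ∏ j : Fin k, v (g j : ℕ) :=
        Finset.prod_congr rfl fun j _ => by rw [hvc]
      rw [hvlast, hvall]
      ring
    · unfold TermF
      rw [if_neg (fun h => hp (hAdm.mp h).2), if_neg hp]
  · unfold TermF
    rw [if_neg (fun h => hA (hAdm.mp h).1), if_neg hA]
    split <;> simp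

lemma GG_succ (n k start : ℕ) (v : ℕ → ℂ) (w : ℕ → ℕ → ℂ) :
    GG (n + 1) (k + 1) start v w
      = w (n + 1) (k + 1) * GG n (k + 1) start v w
        + (if (n + 1) % 2 = (k + start) % 2 then v (n + 1) * GG n k start v w else 0) := by
  classical
  set T := TermF (n + 1) (k + 1) start v w with hT
  have h0 : GG (n + 1) (k + 1) start v w
      = ∑ p : Fin (n + 2) × (Fin k → Fin (n + 2)), T (Fin.snoc p.2 p.1) := by
    rw [GG_eq_sum]
    exact (Fintype.sum_equiv (Fin.snocEquiv (fun _ => Fin (n + 2)))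
      (fun p => T (Fin.snoc p.2 p.1)) T (fun p => rfl)).symm
  rw [h0, Fintype.sum_prod_type, Fin.sum_univ_castSucc]
  have hlast : ∑ g : Fin k → Fin (n + 2), T (Fin.snoc g (Fin.last (n + 1)))
      = if (n + 1) % 2 = (k + start) % 2 then v (n + 1) * GG n k start v w else 0 := by
    rw [sum_restrict (fun g => T (Fin.snoc g (Fin.last (n + 1)))) (fun g hg => by
      obtain ⟨j, hj⟩ := hg
      exact TermF_zero n k start v w _ ⟨j, by rw [Fin.snoc_castSucc]; exact hj⟩)]
    rw [Finset.sum_congr rfl fun g _ => TermF_snoc n k start v w g]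
    by_cases hpar : (n + 1) % 2 = (k + start) % 2
    · simp only [if_pos hpar]
      rw [← Finset.mul_sum, ← GG_eq_sum]
    · simp only [if_neg hpar]
      exact Finset.sum_const_zero
  have hmain : ∑ x : Fin (n + 1), ∑ g : Fin k → Fin (n + 2), T (Fin.snoc g x.castSucc)
      = w (n + 1) (k + 1) * GG n (k + 1) start v w := by
    have hx : ∀ x : Fin (n + 1), ∑ g : Fin k → Fin (n + 2), T (Fin.snoc g x.castSucc)
        = ∑ g : Fin k → Fin (n + 1), T (Fin.snoc (fun j => (g j).castSucc) x.castSucc) :=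
      fun x => sum_restrict _ (fun g hg => by
        obtain ⟨j, hj⟩ := hg
        exact TermF_zero n k start v w _ ⟨j, by rw [Fin.snoc_castSucc]; exact hj⟩)
    rw [Finset.sum_congr rfl (fun x _ => hx x)]
    have hcomp : ∀ (x : Fin (n + 1)) (g : Fin k → Fin (n + 1)),
        (Fin.snoc (fun j => (g j).castSucc) x.castSucc : Fin (k + 1) → Fin (n + 2))
          = fun j => ((Fin.snoc g x : Fin (k + 1) → Fin (n + 1)) j).castSucc :=
      fun x g => (Fin.comp_snoc Fin.castSucc g x).symm
    calc ∑ x : Fin (n + 1), ∑ g : Fin k → Fin (n + 1),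
            T (Fin.snoc (fun j => (g j).castSucc) x.castSucc)
        = ∑ p : Fin (n + 1) × (Fin k → Fin (n + 1)),
            T (fun j => ((Fin.snoc p.2 p.1 : Fin (k + 1) → Fin (n + 1)) j).castSucc) := by
          rw [Fintype.sum_prod_type]
          exact Finset.sum_congr rfl fun x _ => Finset.sum_congr rfl fun g _ => by
            rw [hcomp]
      _ = ∑ i : Fin (k + 1) → Fin (n + 1), T (fun j => (i j).castSucc) :=
          Fintype.sum_equiv (Fin.snocEquiv (fun _ => Fin (n + 1))) _ _ (fun p => rfl)
      _ = ∑ i : Fin (k + 1) → Fin (n + 1), w (n + 1) (k + 1) * TermF n (k + 1) start v w i :=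
          Finset.sum_congr rfl fun i _ => TermF_castSucc n k start v w i
      _ = w (n + 1) (k + 1) * GG n (k + 1) start v w := by
          rw [← Finset.mul_sum, ← GG_eq_sum]
  rw [hmain, hlast]

lemma wmod (w : ℕ → ℕ → ℂ) (hw : ∀ t c, w t (c + 2) = w t c) (t a : ℕ) :
    ∀ k, w t (2 * k + a) = w t a
  | 0 => by norm_num
  | (k + 1) => by
      rw [show 2 * (k + 1) + a = (2 * k + a) + 2 by ring, hw, wmod w hw t a k]

lemma GG_zero_succ (n start : ℕ) (v : ℕ → ℂ) (w : ℕ → ℕ → ℂ) :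
    GG (n + 1) 0 start v w = w (n + 1) 0 * GG n 0 start v w := by
  rw [GG_zero, GG_zero, Finset.prod_Icc_succ_top (show 1 ≤ n + 1 by omega), mul_comm]

lemma g1z (m : ℕ) (v : ℕ → ℂ) (w : ℕ → ℕ → ℂ) :
    GG (2 * m + 2) 0 1 v w = w (2 * m + 2) 0 * w (2 * m + 1) 0 * GG (2 * m) 0 1 v w := by
  rw [show 2 * m + 2 = 2 * m + 1 + 1 by omega, GG_zero_succ, GG_zero_succ]; ring

lemma g0z (m : ℕ) (v : ℕ → ℂ) (w : ℕ → ℕ → ℂ) :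
    GG (2 * m + 2) 0 0 v w = w (2 * m + 2) 0 * w (2 * m + 1) 0 * GG (2 * m) 0 0 v w := by
  rw [show 2 * m + 2 = 2 * m + 1 + 1 by omega, GG_zero_succ, GG_zero_succ]; ring

lemma g1e (v : ℕ → ℂ) (w : ℕ → ℕ → ℂ) (hw : ∀ t c, w t (c + 2) = w t c) (m k : ℕ) :
    GG (2 * m + 2) (2 * k + 2) 1 v w
      = w (2 * m + 2) 0 * w (2 * m + 1) 0 * GG (2 * m) (2 * k + 2) 1 v w
        + v (2 * m + 2) * w (2 * m + 1) 1 * GG (2 * m) (2 * k + 1) 1 v w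
        + v (2 * m + 2) * v (2 * m + 1) * GG (2 * m) (2 * k) 1 v w := by
  have W := wmod w hw
  rw [show 2 * m + 2 = 2 * m + 1 + 1 by omega, show 2 * k + 2 = 2 * k + 1 + 1 by omega]
  rw [GG_succ (2 * m + 1) (2 * k + 1) 1 v w, GG_succ (2 * m) (2 * k + 1) 1 v w,
    GG_succ (2 * m) (2 * k) 1 v w]
  rw [if_pos (show (2 * m + 1 + 1) % 2 = (2 * k + 1 + 1) % 2 by omega),
    if_neg (show ¬((2 * m + 1) % 2 = (2 * k + 1 + 1) % 2) by omega),
    if_pos (show (2 * m + 1) % 2 = (2 * k + 1) % 2 by omega)]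
  rw [show w (2 * m + 1 + 1) (2 * k + 1 + 1) = w (2 * m + 1 + 1) 0 by
      rw [show 2 * k + 1 + 1 = 2 * (k + 1) + 0 by omega]; exact W _ 0 _,
    show w (2 * m + 1) (2 * k + 1 + 1) = w (2 * m + 1) 0 by
      rw [show 2 * k + 1 + 1 = 2 * (k + 1) + 0 by omega]; exact W _ 0 _,
    show w (2 * m + 1) (2 * k + 1) = w (2 * m + 1) 1 from W _ 1 _]
  ring

lemma g1o (v : ℕ → ℂ) (w : ℕ → ℕ → ℂ) (hw : ∀ t c, w t (c + 2) = w t c) (m k : ℕ) :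
    GG (2 * m + 2) (2 * k + 1) 1 v w
      = w (2 * m + 2) 1 * w (2 * m + 1) 1 * GG (2 * m) (2 * k + 1) 1 v w
        + w (2 * m + 2) 1 * v (2 * m + 1) * GG (2 * m) (2 * k) 1 v w := by
  have W := wmod w hw
  rw [show 2 * m + 2 = 2 * m + 1 + 1 by omega]
  rw [GG_succ (2 * m + 1) (2 * k) 1 v w, GG_succ (2 * m) (2 * k) 1 v w]
  rw [if_neg (show ¬((2 * m + 1 + 1) % 2 = (2 * k + 1) % 2) by omega),
    if_pos (show (2 * m + 1) % 2 = (2 * k + 1) % 2 by omega)]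
  rw [show w (2 * m + 1 + 1) (2 * k + 1) = w (2 * m + 1 + 1) 1 from W _ 1 _,
    show w (2 * m + 1) (2 * k + 1) = w (2 * m + 1) 1 from W _ 1 _]
  ring

lemma g0e (v : ℕ → ℂ) (w : ℕ → ℕ → ℂ) (hw : ∀ t c, w t (c + 2) = w t c) (m k : ℕ) :
    GG (2 * m + 2) (2 * k + 2) 0 v w
      = w (2 * m + 2) 0 * w (2 * m + 1) 0 * GG (2 * m) (2 * k + 2) 0 v w
        + w (2 * m + 2) 0 * v (2 * m + 1) * GG (2 * m) (2 * k + 1) 0 v w := by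
  have W := wmod w hw
  rw [show 2 * m + 2 = 2 * m + 1 + 1 by omega, show 2 * k + 2 = 2 * k + 1 + 1 by omega]
  rw [GG_succ (2 * m + 1) (2 * k + 1) 0 v w, GG_succ (2 * m) (2 * k + 1) 0 v w]
  rw [if_neg (show ¬((2 * m + 1 + 1) % 2 = (2 * k + 1 + 0) % 2) by omega),
    if_pos (show (2 * m + 1) % 2 = (2 * k + 1 + 0) % 2 by omega)]
  rw [show w (2 * m + 1 + 1) (2 * k + 1 + 1) = w (2 * m + 1 + 1) 0 by
      rw [show 2 * k + 1 + 1 = 2 * (k + 1) + 0 by omega]; exact W _ 0 _,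
    show w (2 * m + 1) (2 * k + 1 + 1) = w (2 * m + 1) 0 by
      rw [show 2 * k + 1 + 1 = 2 * (k + 1) + 0 by omega]; exact W _ 0 _]
  ring

lemma g0o0 (m : ℕ) (v : ℕ → ℂ) (w : ℕ → ℕ → ℂ) (hw : ∀ t c, w t (c + 2) = w t c) :
    GG (2 * m + 2) 1 0 v w
      = w (2 * m + 2) 1 * w (2 * m + 1) 1 * GG (2 * m) 1 0 v w
        + v (2 * m + 2) * w (2 * m + 1) 0 * GG (2 * m) 0 0 v w := by
  have W := wmod w hw
  rw [show 2 * m + 2 = 2 * m + 1 + 1 by omega, show (1 : ℕ) = 0 + 1 by omega]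
  rw [GG_succ (2 * m + 1) 0 0 v w, GG_succ (2 * m) 0 0 v w]
  rw [if_pos (show (2 * m + 1 + 1) % 2 = (0 + 0) % 2 by omega),
    if_neg (show ¬((2 * m + 1) % 2 = (0 + 0) % 2) by omega), GG_zero_succ]
  rw [show w (2 * m + 1 + 1) (0 + 1) = w (2 * m + 1 + 1) 1 from rfl,
    show w (2 * m + 1) (0 + 1) = w (2 * m + 1) 1 from rfl]
  ring

lemma g0oS (v : ℕ → ℂ) (w : ℕ → ℕ → ℂ) (hw : ∀ t c, w t (c + 2) = w t c) (m k : ℕ) :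
    GG (2 * m + 2) (2 * k + 3) 0 v w
      = w (2 * m + 2) 1 * w (2 * m + 1) 1 * GG (2 * m) (2 * k + 3) 0 v w
        + v (2 * m + 2) * w (2 * m + 1) 0 * GG (2 * m) (2 * k + 2) 0 v w
        + v (2 * m + 2) * v (2 * m + 1) * GG (2 * m) (2 * k + 1) 0 v w := by
  have W := wmod w hw
  rw [show 2 * m + 2 = 2 * m + 1 + 1 by omega, show 2 * k + 3 = 2 * k + 2 + 1 by omega]
  rw [GG_succ (2 * m + 1) (2 * k + 2) 0 v w, GG_succ (2 * m) (2 * k + 2) 0 v w,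
    show 2 * k + 2 = 2 * k + 1 + 1 by omega, GG_succ (2 * m) (2 * k + 1) 0 v w]
  rw [if_pos (show (2 * m + 1 + 1) % 2 = (2 * k + 2 + 0) % 2 by omega),
    if_neg (show ¬((2 * m + 1) % 2 = (2 * k + 2 + 0) % 2) by omega),
    if_pos (show (2 * m + 1) % 2 = (2 * k + 1 + 0) % 2 by omega)]
  rw [show w (2 * m + 1 + 1) (2 * k + 1 + 1 + 1) = w (2 * m + 1 + 1) 1 by
      rw [show 2 * k + 1 + 1 + 1 = 2 * (k + 1) + 1 by omega]; exact W _ 1 _,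
    show w (2 * m + 1) (2 * k + 1 + 1 + 1) = w (2 * m + 1) 1 by
      rw [show 2 * k + 1 + 1 + 1 = 2 * (k + 1) + 1 by omega]; exact W _ 1 _,
    show w (2 * m + 1) (2 * k + 1 + 1) = w (2 * m + 1) 0 by
      rw [show 2 * k + 1 + 1 = 2 * (k + 1) + 0 by omega]; exact W _ 0 _]
  ring

lemma S1o (v : ℕ → ℂ) (w : ℕ → ℕ → ℂ) (hw : ∀ t c, w t (c + 2) = w t c) (μ : ℂ) (m : ℕ) :
    ∑ k ∈ Finset.range (m + 2), GG (2 * m + 2) (2 * k + 1) 1 v w * μ ^ k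
      = w (2 * m + 2) 1 * w (2 * m + 1) 1
          * ∑ k ∈ Finset.range (m + 1), GG (2 * m) (2 * k + 1) 1 v w * μ ^ k
        + w (2 * m + 2) 1 * v (2 * m + 1)
          * ∑ k ∈ Finset.range (m + 1), GG (2 * m) (2 * k) 1 v w * μ ^ k := by
  have h1 : ∀ k ∈ Finset.range (m + 2), GG (2 * m + 2) (2 * k + 1) 1 v w * μ ^ k
      = w (2 * m + 2) 1 * w (2 * m + 1) 1 * (GG (2 * m) (2 * k + 1) 1 v w * μ ^ k)
        + w (2 * m + 2) 1 * v (2 * m + 1) * (GG (2 * m) (2 * k) 1 v w * μ ^ k) := fun k _ => by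
    rw [g1o v w hw m k]; ring
  rw [Finset.sum_congr rfl h1, Finset.sum_add_distrib, ← Finset.mul_sum, ← Finset.mul_sum]
  rw [Finset.sum_range_succ (fun k => GG (2 * m) (2 * k + 1) 1 v w * μ ^ k) (m + 1),
    Finset.sum_range_succ (fun k => GG (2 * m) (2 * k) 1 v w * μ ^ k) (m + 1)]
  rw [GG_vanish _ _ _ _ _ (by omega), GG_vanish _ _ _ _ _ (by omega), zero_mul, add_zero,
    add_zero]

lemma S1e (v : ℕ → ℂ) (w : ℕ → ℕ → ℂ) (hw : ∀ t c, w t (c + 2) = w t c) (μ : ℂ) (m : ℕ) :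
    ∑ k ∈ Finset.range (m + 2), GG (2 * m + 2) (2 * k) 1 v w * μ ^ k
      = (w (2 * m + 2) 0 * w (2 * m + 1) 0 + v (2 * m + 2) * v (2 * m + 1) * μ)
          * ∑ k ∈ Finset.range (m + 1), GG (2 * m) (2 * k) 1 v w * μ ^ k
        + v (2 * m + 2) * w (2 * m + 1) 1 * μ
          * ∑ k ∈ Finset.range (m + 1), GG (2 * m) (2 * k + 1) 1 v w * μ ^ k := by
  rw [Finset.sum_range_succ' (fun k => GG (2 * m + 2) (2 * k) 1 v w * μ ^ k) (m + 1)]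
  have h1 : ∀ k ∈ Finset.range (m + 1), GG (2 * m + 2) (2 * (k + 1)) 1 v w * μ ^ (k + 1)
      = w (2 * m + 2) 0 * w (2 * m + 1) 0 * (GG (2 * m) (2 * (k + 1)) 1 v w * μ ^ (k + 1))
        + v (2 * m + 2) * w (2 * m + 1) 1 * μ * (GG (2 * m) (2 * k + 1) 1 v w * μ ^ k)
        + v (2 * m + 2) * v (2 * m + 1) * μ * (GG (2 * m) (2 * k) 1 v w * μ ^ k) := fun k _ => by
    rw [show 2 * (k + 1) = 2 * k + 2 by omega, g1e v w hw m k]; ring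
  rw [Finset.sum_congr rfl h1, Finset.sum_add_distrib, Finset.sum_add_distrib,
    ← Finset.mul_sum, ← Finset.mul_sum, ← Finset.mul_sum, g1z m v w]
  have h2 : ∑ k ∈ Finset.range (m + 1), GG (2 * m) (2 * (k + 1)) 1 v w * μ ^ (k + 1)
      = (∑ k ∈ Finset.range (m + 1), GG (2 * m) (2 * k) 1 v w * μ ^ k)
        - GG (2 * m) 0 1 v w := by
    have h3 := Finset.sum_range_succ' (fun k => GG (2 * m) (2 * k) 1 v w * μ ^ k) (m + 1)
    have h4 := Finset.sum_range_succ (fun k => GG (2 * m) (2 * k) 1 v w * μ ^ k) (m + 1)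
    rw [GG_vanish _ _ _ _ _ (by omega), zero_mul, add_zero] at h4
    rw [h4] at h3
    simp only [pow_zero, mul_one, Nat.mul_zero] at h3
    linear_combination -h3
  rw [h2]; ring

lemma S0e (v : ℕ → ℂ) (w : ℕ → ℕ → ℂ) (hw : ∀ t c, w t (c + 2) = w t c) (μ : ℂ) (m : ℕ) :
    ∑ k ∈ Finset.range (m + 2), GG (2 * m + 2) (2 * k) 0 v w * μ ^ k
      = w (2 * m + 2) 0 * w (2 * m + 1) 0
          * ∑ k ∈ Finset.range (m + 1), GG (2 * m) (2 * k) 0 v w * μ ^ k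
        + w (2 * m + 2) 0 * v (2 * m + 1) * μ
          * ∑ k ∈ Finset.range (m + 1), GG (2 * m) (2 * k + 1) 0 v w * μ ^ k := by
  rw [Finset.sum_range_succ' (fun k => GG (2 * m + 2) (2 * k) 0 v w * μ ^ k) (m + 1)]
  have h1 : ∀ k ∈ Finset.range (m + 1), GG (2 * m + 2) (2 * (k + 1)) 0 v w * μ ^ (k + 1)
      = w (2 * m + 2) 0 * w (2 * m + 1) 0 * (GG (2 * m) (2 * (k + 1)) 0 v w * μ ^ (k + 1))
        + w (2 * m + 2) 0 * v (2 * m + 1) * μ * (GG (2 * m) (2 * k + 1) 0 v w * μ ^ k) :=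
    fun k _ => by
      rw [show 2 * (k + 1) = 2 * k + 2 by omega, g0e v w hw m k]; ring
  rw [Finset.sum_congr rfl h1, Finset.sum_add_distrib, ← Finset.mul_sum, ← Finset.mul_sum,
    g0z m v w]
  have h2 : ∑ k ∈ Finset.range (m + 1), GG (2 * m) (2 * (k + 1)) 0 v w * μ ^ (k + 1)
      = (∑ k ∈ Finset.range (m + 1), GG (2 * m) (2 * k) 0 v w * μ ^ k)
        - GG (2 * m) 0 0 v w := by
    have h3 := Finset.sum_range_succ' (fun k => GG (2 * m) (2 * k) 0 v w * μ ^ k) (m + 1)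
    have h4 := Finset.sum_range_succ (fun k => GG (2 * m) (2 * k) 0 v w * μ ^ k) (m + 1)
    rw [GG_vanish _ _ _ _ _ (by omega), zero_mul, add_zero] at h4
    rw [h4] at h3
    simp only [pow_zero, mul_one, Nat.mul_zero] at h3
    linear_combination -h3
  rw [h2]; ring

lemma S0o (v : ℕ → ℂ) (w : ℕ → ℕ → ℂ) (hw : ∀ t c, w t (c + 2) = w t c) (μ : ℂ) (m : ℕ) :
    ∑ k ∈ Finset.range (m + 2), GG (2 * m + 2) (2 * k + 1) 0 v w * μ ^ k
      = (w (2 * m + 2) 1 * w (2 * m + 1) 1 + v (2 * m + 2) * v (2 * m + 1) * μ)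
          * ∑ k ∈ Finset.range (m + 1), GG (2 * m) (2 * k + 1) 0 v w * μ ^ k
        + v (2 * m + 2) * w (2 * m + 1) 0
          * ∑ k ∈ Finset.range (m + 1), GG (2 * m) (2 * k) 0 v w * μ ^ k := by
  rw [Finset.sum_range_succ' (fun k => GG (2 * m + 2) (2 * k + 1) 0 v w * μ ^ k) (m + 1)]
  have h1 : ∀ k ∈ Finset.range (m + 1), GG (2 * m + 2) (2 * (k + 1) + 1) 0 v w * μ ^ (k + 1)
      = w (2 * m + 2) 1 * w (2 * m + 1) 1 * (GG (2 * m) (2 * (k + 1) + 1) 0 v w * μ ^ (k + 1))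
        + v (2 * m + 2) * w (2 * m + 1) 0 * (GG (2 * m) (2 * (k + 1)) 0 v w * μ ^ (k + 1))
        + v (2 * m + 2) * v (2 * m + 1) * μ * (GG (2 * m) (2 * k + 1) 0 v w * μ ^ k) :=
    fun k _ => by
      rw [show 2 * (k + 1) + 1 = 2 * k + 3 by omega, show 2 * (k + 1) = 2 * k + 2 by omega,
        g0oS v w hw m k]
      ring
  rw [Finset.sum_congr rfl h1, Finset.sum_add_distrib, Finset.sum_add_distrib,
    ← Finset.mul_sum, ← Finset.mul_sum, ← Finset.mul_sum]
  simp only [Nat.mul_zero, pow_zero, mul_one]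
  rw [g0o0 m v w hw]
  have h2 : ∑ k ∈ Finset.range (m + 1), GG (2 * m) (2 * (k + 1)) 0 v w * μ ^ (k + 1)
      = (∑ k ∈ Finset.range (m + 1), GG (2 * m) (2 * k) 0 v w * μ ^ k)
        - GG (2 * m) 0 0 v w := by
    have h3 := Finset.sum_range_succ' (fun k => GG (2 * m) (2 * k) 0 v w * μ ^ k) (m + 1)
    have h4 := Finset.sum_range_succ (fun k => GG (2 * m) (2 * k) 0 v w * μ ^ k) (m + 1)
    rw [GG_vanish _ _ _ _ _ (by omega), zero_mul, add_zero] at h4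
    rw [h4] at h3
    simp only [pow_zero, mul_one, Nat.mul_zero] at h3
    linear_combination -h3
  have h5 : ∑ k ∈ Finset.range (m + 1), GG (2 * m) (2 * (k + 1) + 1) 0 v w * μ ^ (k + 1)
      = (∑ k ∈ Finset.range (m + 1), GG (2 * m) (2 * k + 1) 0 v w * μ ^ k)
        - GG (2 * m) 1 0 v w := by
    have h3 := Finset.sum_range_succ' (fun k => GG (2 * m) (2 * k + 1) 0 v w * μ ^ k) (m + 1)
    have h4 := Finset.sum_range_succ (fun k => GG (2 * m) (2 * k + 1) 0 v w * μ ^ k) (m + 1)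
    rw [GG_vanish _ _ _ _ _ (by omega), zero_mul, add_zero] at h4
    rw [h4] at h3
    simp only [pow_zero, mul_one, Nat.mul_zero, Nat.zero_add] at h3
    linear_combination -h3
  rw [h2, h5]; ring

lemma GG_zero_zero (start : ℕ) (v : ℕ → ℂ) (w : ℕ → ℕ → ℂ) : GG 0 0 start v w = 1 := by
  rw [GG_zero]; simp

/-- change of variables `λ ↦ λ̃ = λ + z²`.
For every `l ≥ 1`, every `ε ∈ {1,−1}^{2l}` and all `M ≠ 0`, `λ ∈ ℂ`, with
`z = M − M⁻¹` and `λ̃ = λ + z²`: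
(i) `Σ_k c̃_{2k+1}^{2l}(M,ε)·λ̃ᵏ = Σ_k c_{2k+1}^{2l}(M,ε)·λᵏ`;
(ii) `Σ_k d̃_{2k+1}^{2l}(M,ε)·λ̃ᵏ = Σ_k d_{2k+1}^{2l}(M⁻¹,ε)·λᵏ`;
(iii) `Σ_k c̃_{2k}^{2l}(M,ε)·λ̃ᵏ = Σ_k (c_{2k}^{2l}(M,ε) − z·c_{2k+1}^{2l}(M,ε))·λᵏ`. -/
theorem tilde_lambda_change (l : ℕ) (hl : 1 ≤ l) (ε : ℕ → ℤ)
    (hε : ∀ i, 1 ≤ i → i ≤ 2 * l → ε i = 1 ∨ ε i = -1)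
    (M : ℂ) (hM0 : M ≠ 0) (lam : ℂ) :
    (∑ k ∈ Finset.range l, cT (2 * l) (2 * k + 1) ε M * (lam + (M - M⁻¹) ^ 2) ^ k =
      ∑ k ∈ Finset.range l, cP (2 * l) (2 * k + 1) ε M * lam ^ k) ∧
    (∑ k ∈ Finset.range l, dT (2 * l) (2 * k + 1) ε M * (lam + (M - M⁻¹) ^ 2) ^ k =
      ∑ k ∈ Finset.range l, dP (2 * l) (2 * k + 1) ε M⁻¹ * lam ^ k) ∧
    (∑ k ∈ Finset.range (l + 1), cT (2 * l) (2 * k) ε M * (lam + (M - M⁻¹) ^ 2) ^ k =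
      ∑ k ∈ Finset.range (l + 1),
        (cP (2 * l) (2 * k) ε M - (M - M⁻¹) * cP (2 * l) (2 * k + 1) ε M) * lam ^ k) := by
  classical
  have hMi : (M : ℂ)⁻¹ ≠ 0 := inv_ne_zero hM0
  have HcP : ∀ n k, cP n k ε M
      = GG n k 1 (fun t => (ε t : ℂ)) (fun t c => M ^ ((-1 : ℤ) ^ c * ε t)) :=
    fun n k => cP_eq_s6 n k ε M hM0
  have HcT : ∀ n k, cT n k ε M
      = GG n k 1 (fun t => (ε t : ℂ)) (fun t c => M ^ ((-1 : ℤ) ^ (t + c) * ε t)) :=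
    fun n k => cT_eq n k ε M hM0
  have HdP : ∀ n k, dP n k ε M⁻¹
      = GG n k 0 (fun t => (ε t : ℂ)) (fun t c => M⁻¹ ^ (-((-1 : ℤ) ^ c * ε t))) :=
    fun n k => dP_eq_s6 n k ε M⁻¹ hMi
  have HdT : ∀ n k, dT n k ε M
      = GG n k 0 (fun t => (ε t : ℂ)) (fun t c => M ^ (-((-1 : ℤ) ^ (t + c) * ε t))) :=
    fun n k => dT_eq n k ε M hM0
  simp only [HcP, HcT, HdP, HdT]
  set v : ℕ → ℂ := fun t => (ε t : ℂ) with hv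
  set Wc : ℕ → ℕ → ℂ := fun t c => M ^ ((-1 : ℤ) ^ c * ε t) with hWc
  set Wt : ℕ → ℕ → ℂ := fun t c => M ^ ((-1 : ℤ) ^ (t + c) * ε t) with hWt
  set Wd : ℕ → ℕ → ℂ := fun t c => M⁻¹ ^ (-((-1 : ℤ) ^ c * ε t)) with hWd
  set Wdt : ℕ → ℕ → ℂ := fun t c => M ^ (-((-1 : ℤ) ^ (t + c) * ε t)) with hWdt
  set lt : ℂ := lam + (M - M⁻¹) ^ 2 with hlt
  -- periodicity
  have hwWc : ∀ t c, Wc t (c + 2) = Wc t c := by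
    intro t c; rw [hWc]; norm_num [pow_add]
  have hwWt : ∀ t c, Wt t (c + 2) = Wt t c := by
    intro t c; rw [hWt]
    norm_num [show t + (c + 2) = (t + c) + 2 by omega, pow_add]
  have hwWd : ∀ t c, Wd t (c + 2) = Wd t c := by
    intro t c; rw [hWd]; norm_num [pow_add]
  have hwWdt : ∀ t c, Wdt t (c + 2) = Wdt t c := by
    intro t c; rw [hWdt]
    norm_num [show t + (c + 2) = (t + c) + 2 by omega, pow_add]
  -- values
  have hodd : ∀ m : ℕ, (-1 : ℤ) ^ (2 * m + 1) = -1 := fun m => Odd.neg_one_pow ⟨m, by omega⟩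
  have heven : ∀ m : ℕ, (-1 : ℤ) ^ (2 * m) = 1 := fun m => Even.neg_one_pow ⟨m, by omega⟩
  have hWc0 : ∀ t, Wc t 0 = M ^ (ε t) := by intro t; rw [hWc]; norm_num
  have hWc1 : ∀ t, Wc t 1 = M ^ (-ε t) := by intro t; rw [hWc]; norm_num
  have hWd0 : ∀ t, Wd t 0 = M ^ (ε t) := by
    intro t; rw [hWd]; simp only [pow_zero, one_mul, inv_zpow', neg_neg]
  have hWd1 : ∀ t, Wd t 1 = M ^ (-ε t) := by
    intro t; rw [hWd]; simp only [pow_one, neg_mul, one_mul, neg_neg, inv_zpow']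
  have hWt0o : ∀ m, Wt (2 * m + 1) 0 = M ^ (-ε (2 * m + 1)) := by
    intro m; rw [hWt]; norm_num [hodd m]
  have hWt1o : ∀ m, Wt (2 * m + 1) 1 = M ^ (ε (2 * m + 1)) := by
    intro m; rw [hWt]
    norm_num [show 2 * m + 1 + 1 = 2 * (m + 1) by omega, heven (m + 1)]
  have hWt0e : ∀ m, Wt (2 * m + 2) 0 = M ^ (ε (2 * m + 2)) := by
    intro m; rw [hWt]
    norm_num [show 2 * m + 2 + 0 = 2 * (m + 1) by omega, heven (m + 1)]
  have hWt1e : ∀ m, Wt (2 * m + 2) 1 = M ^ (-ε (2 * m + 2)) := by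
    intro m; rw [hWt]
    norm_num [show 2 * m + 2 + 1 = 2 * (m + 1) + 1 by omega, hodd (m + 1)]
  have hWdt0o : ∀ m, Wdt (2 * m + 1) 0 = M ^ (ε (2 * m + 1)) := by
    intro m; rw [hWdt]; norm_num [hodd m]
  have hWdt1o : ∀ m, Wdt (2 * m + 1) 1 = M ^ (-ε (2 * m + 1)) := by
    intro m; rw [hWdt]
    norm_num [show 2 * m + 1 + 1 = 2 * (m + 1) by omega, heven (m + 1)]
  have hWdt0e : ∀ m, Wdt (2 * m + 2) 0 = M ^ (-ε (2 * m + 2)) := by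
    intro m; rw [hWdt]
    norm_num [show 2 * m + 2 + 0 = 2 * (m + 1) by omega, heven (m + 1)]
  have hWdt1e : ∀ m, Wdt (2 * m + 2) 1 = M ^ (ε (2 * m + 2)) := by
    intro m; rw [hWdt]
    norm_num [show 2 * m + 2 + 1 = 2 * (m + 1) + 1 by omega, hodd (m + 1)]
  have f2 : ∀ t, 1 ≤ t → t ≤ 2 * l → M ^ (-ε t) = M ^ (ε t) - (ε t : ℂ) * (M - M⁻¹) := by
    intro t h1 h2
    rcases hε t h1 h2 with h | h <;> rw [h] <;>
      simp only [neg_neg, zpow_one, zpow_neg, Int.cast_one, Int.cast_neg, neg_mul, one_mul] <;>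
      ring
  have key : ∀ m, m ≤ l →
      ((∑ k ∈ Finset.range (m + 1), GG (2 * m) (2 * k + 1) 1 v Wt * lt ^ k
          = ∑ k ∈ Finset.range (m + 1), GG (2 * m) (2 * k + 1) 1 v Wc * lam ^ k)
        ∧ (∑ k ∈ Finset.range (m + 1), GG (2 * m) (2 * k) 1 v Wt * lt ^ k
          = (∑ k ∈ Finset.range (m + 1), GG (2 * m) (2 * k) 1 v Wc * lam ^ k)
            - (M - M⁻¹) * ∑ k ∈ Finset.range (m + 1), GG (2 * m) (2 * k + 1) 1 v Wc * lam ^ k)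
        ∧ (∑ k ∈ Finset.range (m + 1), GG (2 * m) (2 * k + 1) 0 v Wdt * lt ^ k
          = ∑ k ∈ Finset.range (m + 1), GG (2 * m) (2 * k + 1) 0 v Wd * lam ^ k)
        ∧ (∑ k ∈ Finset.range (m + 1), GG (2 * m) (2 * k) 0 v Wdt * lt ^ k
          = (∑ k ∈ Finset.range (m + 1), GG (2 * m) (2 * k) 0 v Wd * lam ^ k)
            - (M - M⁻¹) * ∑ k ∈ Finset.range (m + 1), GG (2 * m) (2 * k + 1) 0 v Wd * lam ^ k)) := by
    intro m
    induction m with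
    | zero =>
        intro _
        refine ⟨?_, ?_, ?_, ?_⟩ <;>
          simp only [Nat.mul_zero, Nat.zero_add, Finset.sum_range_one, pow_zero, mul_one]
        · rw [GG_vanish 0 1 1 v Wt (by omega), GG_vanish 0 1 1 v Wc (by omega)]
        · rw [GG_zero_zero 1 v Wt, GG_zero_zero 1 v Wc, GG_vanish 0 1 1 v Wc (by omega)]
          ring
        · rw [GG_vanish 0 1 0 v Wdt (by omega), GG_vanish 0 1 0 v Wd (by omega)]
        · rw [GG_zero_zero 0 v Wdt, GG_zero_zero 0 v Wd, GG_vanish 0 1 0 v Wd (by omega)]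
          ring
    | succ m ih =>
        intro hm1
        obtain ⟨ih1, ih2, ih3, ih4⟩ := ih (by omega)
        have F1 := f2 (2 * m + 1) (by omega) (by omega)
        have F2 := f2 (2 * m + 2) (by omega) (by omega)
        refine ⟨?_, ?_, ?_, ?_⟩
        · rw [show 2 * (m + 1) = 2 * m + 2 by omega, show m + 1 + 1 = m + 2 by omega]
          rw [S1o v Wt hwWt lt m, S1o v Wc hwWc lam m, ih1, ih2]
          rw [hWt1e m, hWt1o m, hWc1 (2 * m + 2), hWc1 (2 * m + 1), F1, F2]
          ring
        · rw [show 2 * (m + 1) = 2 * m + 2 by omega, show m + 1 + 1 = m + 2 by omega]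
          rw [S1e v Wt hwWt lt m, S1e v Wc hwWc lam m, S1o v Wc hwWc lam m, ih1, ih2]
          rw [hWt0e m, hWt0o m, hWt1o m, hWc0 (2 * m + 2), hWc0 (2 * m + 1),
            hWc1 (2 * m + 2), hWc1 (2 * m + 1), F1, F2, hlt]
          simp only [hv]
          ring
        · rw [show 2 * (m + 1) = 2 * m + 2 by omega, show m + 1 + 1 = m + 2 by omega]
          rw [S0o v Wdt hwWdt lt m, S0o v Wd hwWd lam m, ih3, ih4]
          rw [hWdt1e m, hWdt1o m, hWdt0o m, hWd1 (2 * m + 2), hWd1 (2 * m + 1),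
            hWd0 (2 * m + 1), F1, F2, hlt]
          simp only [hv]
          ring
        · rw [show 2 * (m + 1) = 2 * m + 2 by omega, show m + 1 + 1 = m + 2 by omega]
          rw [S0e v Wdt hwWdt lt m, S0e v Wd hwWd lam m, S0o v Wd hwWd lam m, ih3, ih4]
          rw [hWdt0e m, hWdt0o m, hWd0 (2 * m + 2), hWd0 (2 * m + 1),
            hWd1 (2 * m + 2), hWd1 (2 * m + 1), F1, F2, hlt]
          simp only [hv]
          ring
  obtain ⟨K1, K2, K3, K4⟩ := key l (le_refl l)
  refine ⟨?_, ?_, ?_⟩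
  · have h4 := Finset.sum_range_succ (fun k => GG (2 * l) (2 * k + 1) 1 v Wt * lt ^ k) l
    have h5 := Finset.sum_range_succ (fun k => GG (2 * l) (2 * k + 1) 1 v Wc * lam ^ k) l
    rw [GG_vanish _ _ _ _ _ (by omega), zero_mul, add_zero] at h4
    rw [GG_vanish _ _ _ _ _ (by omega), zero_mul, add_zero] at h5
    rw [← h4, ← h5]
    exact K1
  · have h4 := Finset.sum_range_succ (fun k => GG (2 * l) (2 * k + 1) 0 v Wdt * lt ^ k) l
    have h5 := Finset.sum_range_succ (fun k => GG (2 * l) (2 * k + 1) 0 v Wd * lam ^ k) l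
    rw [GG_vanish _ _ _ _ _ (by omega), zero_mul, add_zero] at h4
    rw [GG_vanish _ _ _ _ _ (by omega), zero_mul, add_zero] at h5
    rw [← h4, ← h5]
    exact K3
  · have hsplit : ∀ k ∈ Finset.range (l + 1),
        (GG (2 * l) (2 * k) 1 v Wc - (M - M⁻¹) * GG (2 * l) (2 * k + 1) 1 v Wc) * lam ^ k
          = GG (2 * l) (2 * k) 1 v Wc * lam ^ k
            - (M - M⁻¹) * (GG (2 * l) (2 * k + 1) 1 v Wc * lam ^ k) := fun k _ => by ring
    rw [Finset.sum_congr rfl hsplit, Finset.sum_sub_distrib, ← Finset.mul_sum]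
    exact K2
end

section
/- The relation W·X = Y·W holds if and only if W₁₁ − z·W₁₂ = 0. (That is, the assignment x ↦ X, y ↦ Y defines a non-abelian SL(2,ℂ)-representation of the 2-bridge kmot group G(ε) = ⟨x, y | wx = yw⟩ with w = x^{ε₁}y^{ε₂}⋯x^{ε_{α−2}}y^{ε_{α−1}} exactly when W₁₁ − z·W₁₂ = 0.) -/
open Matrix

private lemma transpose_fin_two' (a b c d : ℂ) : (!![a, b; c, d])ᵀ = !![a, c; b, d] := by
  ext i j; fin_cases i <;> fin_cases j <;> rfl

private lemma fin_two_eq {a b c d e f g h : ℂ} (h1 : a = e) (h2 : b = f)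
    (h3 : c = g) (h4 : d = h) : !![a, b; c, d] = !![e, f; g, h] := by
  rw [h1, h2, h3, h4]

private lemma conj_prod (J J' : Mat) (h : J * J' = 1) (h' : J' * J = 1) :
    ∀ l : List Mat, (l.map fun A => J * A * J').prod = J * l.prod * J'
  | [] => by simpa using h.symm
  | A :: t => by
    rw [List.map_cons, List.prod_cons, conj_prod J J' h h' t, List.prod_cons]
    calc (J * A * J') * (J * t.prod * J')
        = J * (A * ((J' * J) * (t.prod * J'))) := by simp only [mul_assoc]
      _ = J * (A * (t.prod * J')) := by rw [h', one_mul]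
      _ = J * (A * t.prod) * J' := by simp only [mul_assoc]

private lemma prod_lower : ∀ l : List Mat, (∀ A ∈ l, A 1 0 = 0) → l.prod 1 0 = 0
  | [], _ => by simp [Matrix.one_apply]
  | A :: t, h => by
    rw [List.prod_cons]
    have hA := h A (by simp)
    have ht := prod_lower t (fun B hB => h B (List.mem_cons_of_mem _ hB))
    rw [Matrix.mul_apply, Fin.sum_univ_two, hA, ht]
    ring

private lemma map_range_reverse {β : Type*} (n : ℕ) (f : ℕ → β) :
    ((List.range n).map f).reverse = (List.range n).map (fun i => f (n - 1 - i)) := by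
  apply List.ext_getElem
  · simp
  · intro i h1 h2
    simp only [List.length_reverse, List.length_map, List.length_range] at h1 h2
    rw [List.getElem_reverse]
    simp only [List.getElem_map, List.getElem_range, List.length_map, List.length_range]

/-- Riley's criterion.
With `X = [[M,1],[0,M⁻¹]]`, `Y = [[M,0],[λ,M⁻¹]]`, `z = M − M⁻¹`, and
`W = X^{ε₁} Y^{ε₂} ⋯ Y^{ε_{α−1}}`, the relation `W·X = Y·W` holds (i.e. `x ↦ X`,
`y ↦ Y` defines a representation of the 2-bridge kmot group
`G(ε) = ⟨x, y | wx = yw⟩`) if and only if `W₁₁ − z·W₁₂ = 0`. -/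
theorem riley_criterion (M : ℂ) (hM0 : M ≠ 0) (hM1 : M ≠ 1) (hMneg1 : M ≠ -1)
    (lam : ℂ) (α : ℕ) (hodd : Odd α) (hα : 3 ≤ α) (ε : ℕ → ℤ)
    (hε : ∀ i, 1 ≤ i → i ≤ α - 1 → ε i = 1 ∨ ε i = -1)
    (hsym : ∀ i, 1 ≤ i → i ≤ α - 1 → ε i = ε (α - i))
    (X Y W : Mat) (hX : X = !![M, 1; 0, M⁻¹]) (hY : Y = !![M, 0; lam, M⁻¹])
    (hW : W = Wword α ε X Y) :
    W * X = Y * W ↔ W 0 0 - (M - M⁻¹) * W 0 1 = 0 := by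
  have hXi : (!![M, 1; 0, M⁻¹])⁻¹ = !![M⁻¹, -1; 0, M] := by
    apply Matrix.inv_eq_right_inv
    rw [Matrix.mul_fin_two, Matrix.one_fin_two]
    congr 1 <;> field_simp <;> simp
  have hYi : (!![M, 0; lam, M⁻¹])⁻¹ = !![M⁻¹, 0; -lam, M] := by
    apply Matrix.inv_eq_right_inv
    rw [Matrix.mul_fin_two, Matrix.one_fin_two]
    congr 1 <;> field_simp <;> ring
  set n := α - 1 with hn
  set L : ℕ → Mat := fun i => (if i % 2 = 1 then X else Y) ^ ε i with hL
  have hW' : W = ((List.range n).map fun i => L (i + 1)).prod := hW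
  -- key symmetry: W 1 0 = lam * W 0 1
  have hkey : W 1 0 = lam * W 0 1 := by
    rcases eq_or_ne lam 0 with h0 | hlam
    · rw [h0, zero_mul, hW']
      apply prod_lower
      intro A hA
      simp only [List.mem_map, List.mem_range] at hA
      obtain ⟨i, hi, rfl⟩ := hA
      rcases hε (i + 1) (by omega) (by omega) with he | he <;>
        simp only [hL] <;> rw [he] <;> by_cases hp : (i + 1) % 2 = 1 <;>
        simp [hp, Matrix.zpow_neg_one, zpow_one, hX, hY, hXi, hYi] <;> simp [h0]
    · set J : Mat := !![1, 0; 0, lam] with hJdef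
      set J' : Mat := !![1, 0; 0, lam⁻¹] with hJ'def
      have hJ : J * J' = 1 := by
        rw [hJdef, hJ'def, Matrix.mul_fin_two, Matrix.one_fin_two]
        congr 1 <;> field_simp <;> simp
      have hJ' : J' * J = 1 := by
        rw [hJdef, hJ'def, Matrix.mul_fin_two, Matrix.one_fin_two]
        congr 1 <;> field_simp <;> simp
      have hconj : ∀ j, 1 ≤ j → j ≤ n → J * (L (α - j))ᵀ * J' = L j := by
        intro j h1 h2
        obtain ⟨k, hk⟩ := hodd
        have hpar : (α - j) % 2 = 1 ↔ ¬(j % 2 = 1) := by omega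
        have hes := hsym j h1 (by omega)
        have hLj : L (α - j) = (if j % 2 = 1 then Y else X) ^ ε j := by
          simp only [hL]
          rw [← hes]
          by_cases hp : j % 2 = 1
          · have : ¬((α - j) % 2 = 1) := by omega
            simp [hp, this]
          · have : (α - j) % 2 = 1 := hpar.mpr hp
            simp [hp, this]
        rw [hLj]
        simp only [hL]
        rcases hε j h1 (by omega) with he | he <;> rw [he] <;>
          by_cases hp : j % 2 = 1 <;>
          simp only [hp, if_true, if_false, zpow_one, Matrix.zpow_neg_one,
            hX, hY, hXi, hYi, hJdef, hJ'def, transpose_fin_two',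
            Matrix.mul_fin_two] <;>
          (apply fin_two_eq <;> field_simp <;> try ring)
      have hfix : J * Wᵀ * J' = W := by
        rw [hW', Matrix.transpose_list_prod, ← conj_prod J J' hJ hJ',
          List.map_reverse, List.map_map, List.map_map, map_range_reverse]
        congr 1
        apply List.map_congr_left
        intro i hi
        simp only [List.mem_range] at hi
        have h1 : 1 ≤ n := by omega
        have harg : n - 1 - i + 1 = α - (i + 1) := by omega
        simp only [Function.comp]
        rw [harg]
        exact hconj (i + 1) (by omega) (by omega)
      rw [Matrix.eta_fin_two W, hJdef, hJ'def, transpose_fin_two',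
        Matrix.mul_fin_two, Matrix.mul_fin_two] at hfix
      have := congrFun (congrFun hfix 1) 0
      simp at this
      linear_combination -this
  constructor
  · intro h
    have h01 := congrFun (congrFun h 0) 1
    simp [hX, hY, Matrix.mul_apply, Fin.sum_univ_two] at h01
    linear_combination h01
  · intro h
    ext i j
    fin_cases i <;> fin_cases j
    · simp [hX, hY, Matrix.mul_apply, Fin.sum_univ_two]; try ring
    · simp [hX, hY, Matrix.mul_apply, Fin.sum_univ_two]
      linear_combination h
    · simp [hX, hY, Matrix.mul_apply, Fin.sum_univ_two]
      linear_combination M * hkey - lam * h - M⁻¹ * hkey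
    · simp [hX, hY, Matrix.mul_apply, Fin.sum_univ_two]
      linear_combination hkey
end

section
/- Let W⁰ denote W evaluated at λ = 0, let σ = ε₁ + ⋯ + ε_{α−1}, and for odd k with 1 ≤ k ≤ α−1 set ŵ_k = (ε₁+⋯+ε_{k−1}) − (ε_{k+1}+⋯+ε_{α−1}). Then W⁰₁₁ − z·W⁰₁₂ = M^σ − z·Σ_{k odd, 1 ≤ k ≤ α−1} ε_k·M^{ŵ_k}. (This quantity is the normalized Alexander polynomial Δ(M²) of the kmot group G(ε).) -/
/-- Product of upper triangular 2×2 matrices. -/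
lemma tri_prod (a b d : ℕ → ℂ) (n : ℕ) :
    ((List.range n).map fun i => !![a i, b i; 0, d i]).prod =
      !![∏ i ∈ Finset.range n, a i,
         ∑ k ∈ Finset.range n, (∏ i ∈ Finset.range k, a i) * b k *
            ∏ i ∈ Finset.Ico (k+1) n, d i;
         0, ∏ i ∈ Finset.range n, d i] := by
  induction n with
  | zero => simp [Matrix.one_fin_two]
  | succ n ih =>
    rw [List.range_succ, List.map_append, List.prod_append, ih]
    simp only [List.map_singleton, List.prod_singleton, Matrix.mul_fin_two]
    have hsum : ∑ k ∈ Finset.range (n+1), (∏ i ∈ Finset.range k, a i) * b k *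
          ∏ i ∈ Finset.Ico (k+1) (n+1), d i
        = (∏ i ∈ Finset.range n, a i) * b n +
          (∑ k ∈ Finset.range n, (∏ i ∈ Finset.range k, a i) * b k *
            ∏ i ∈ Finset.Ico (k+1) n, d i) * d n := by
      rw [Finset.sum_range_succ]
      simp only [Finset.Ico_self, Finset.prod_empty, mul_one]
      rw [add_comm, Finset.sum_mul]
      congr 1
      refine Finset.sum_congr rfl fun k hk => ?_
      rw [Finset.prod_Ico_succ_top (Nat.succ_le_of_lt (Finset.mem_range.mp hk))]
      ring
    rw [hsum, Finset.prod_range_succ, Finset.prod_range_succ]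
    simp

lemma prod_zpow_eq (M : ℂ) (hM0 : M ≠ 0) (e : ℕ → ℤ) (s : Finset ℕ) :
    ∏ i ∈ s, M ^ e i = M ^ (∑ i ∈ s, e i) := by
  induction s using Finset.cons_induction with
  | empty => simp
  | cons i s hi ih => rw [Finset.prod_cons, Finset.sum_cons, zpow_add₀ hM0, ih]

/-- the Alexander polynomial from the Riley polynomial at `λ = 0`.
Let `W⁰` be `W` with `λ = 0`, `σ = ε₁ + ⋯ + ε_{α−1}`, and for odd `k` set
`ŵ_k = (ε₁+⋯+ε_{k−1}) − (ε_{k+1}+⋯+ε_{α−1})`.  Then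
`W⁰₁₁ − z·W⁰₁₂ = M^σ − z·Σ_{k odd} ε_k·M^{ŵ_k}` (which is `Δ(M²)`). -/
theorem alexander_formula (M : ℂ) (hM0 : M ≠ 0) (hM1 : M ≠ 1) (hMneg1 : M ≠ -1)
    (α : ℕ) (hodd : Odd α) (hα : 3 ≤ α) (ε : ℕ → ℤ)
    (hε : ∀ i, 1 ≤ i → i ≤ α - 1 → ε i = 1 ∨ ε i = -1)
    (hsym : ∀ i, 1 ≤ i → i ≤ α - 1 → ε i = ε (α - i))
    (W0 : Mat) (hW0 : W0 = Wword α ε !![M, 1; 0, M⁻¹] !![M, 0; 0, M⁻¹]) :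
    W0 0 0 - (M - M⁻¹) * W0 0 1 =
      M ^ (∑ i ∈ Finset.Icc 1 (α - 1), ε i) -
        (M - M⁻¹) *
          ∑ k ∈ (Finset.Icc 1 (α - 1)).filter (fun k => k % 2 = 1),
            (ε k : ℂ) *
              M ^ ((∑ i ∈ Finset.Icc 1 (k - 1), ε i) -
                    ∑ i ∈ Finset.Icc (k + 1) (α - 1), ε i) := by
  set X : Mat := !![M, 1; 0, M⁻¹] with hX
  set Y : Mat := !![M, 0; 0, M⁻¹] with hY
  set b : ℕ → ℂ := fun i => if (i + 1) % 2 = 1 then (ε (i + 1) : ℂ) else 0 with hb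
  have hXinv : X⁻¹ = !![M⁻¹, -1; 0, M] := by
    apply Matrix.inv_eq_right_inv
    rw [hX, Matrix.mul_fin_two, Matrix.one_fin_two]
    congr 1 <;> field_simp <;> norm_num
  have hYinv : Y⁻¹ = !![M⁻¹, 0; 0, M] := by
    apply Matrix.inv_eq_right_inv
    rw [hY, Matrix.mul_fin_two, Matrix.one_fin_two]
    congr 1 <;> field_simp <;> norm_num
  have hletter : ∀ i ∈ List.range (α - 1),
      ((if (i + 1) % 2 = 1 then X else Y) ^ ε (i + 1) : Mat) =
        !![M ^ ε (i + 1), b i; 0, M ^ (-ε (i + 1))] := by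
    intro i hi
    have hi' : i + 1 ≤ α - 1 := Nat.succ_le_of_lt (List.mem_range.mp hi)
    rcases hε (i + 1) (Nat.le_add_left 1 i) hi' with h | h <;>
      rcases Nat.mod_two_eq_zero_or_one (i + 1) with hp | hp <;>
      simp only [hb, h, hp] <;> norm_num [hXinv, hYinv, hX, hY] <;> assumption
  have hW : W0 = !![∏ i ∈ Finset.range (α - 1), M ^ ε (i + 1),
      ∑ k ∈ Finset.range (α - 1),
        (∏ i ∈ Finset.range k, M ^ ε (i + 1)) * b k *
          ∏ i ∈ Finset.Ico (k + 1) (α - 1), M ^ (-ε (i + 1));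
      0, ∏ i ∈ Finset.range (α - 1), M ^ (-ε (i + 1))] := by
    rw [hW0, Wword, List.map_congr_left hletter, tri_prod]
  have hsigma : ∑ i ∈ Finset.Icc 1 (α - 1), ε i =
      ∑ i ∈ Finset.range (α - 1), ε (i + 1) := by
    rw [← Finset.Ico_add_one_right_eq_Icc, Finset.sum_Ico_eq_sum_range, Nat.add_sub_cancel]
    exact Finset.sum_congr rfl fun i _ => by rw [Nat.add_comm]
  have h00 : W0 0 0 = M ^ (∑ i ∈ Finset.Icc 1 (α - 1), ε i) := by
    rw [hW, prod_zpow_eq M hM0, hsigma]; simp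
  have h01 : W0 0 1 =
      ∑ k ∈ (Finset.Icc 1 (α - 1)).filter (fun k => k % 2 = 1),
        (ε k : ℂ) * M ^ ((∑ i ∈ Finset.Icc 1 (k - 1), ε i) -
              ∑ i ∈ Finset.Icc (k + 1) (α - 1), ε i) := by
    rw [hW]
    simp only [Matrix.cons_val', Matrix.cons_val_one, Matrix.head_cons,
      Matrix.empty_val', Matrix.cons_val_fin_one, Matrix.cons_val_zero,
      Matrix.of_apply, Matrix.head_fin_const]
    rw [Finset.sum_filter, ← Finset.Ico_add_one_right_eq_Icc, Finset.sum_Ico_eq_sum_range,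
      Nat.add_sub_cancel]
    refine Finset.sum_congr rfl fun k hk => ?_
    have h1k : 1 + k = k + 1 := Nat.add_comm 1 k
    rw [h1k]
    by_cases hp : (k + 1) % 2 = 1
    · rw [if_pos hp]
      have hA : ∑ i ∈ Finset.Icc 1 (k + 1 - 1), ε i =
          ∑ i ∈ Finset.range k, ε (i + 1) := by
        simp only [Nat.add_sub_cancel]
        rw [← Finset.Ico_add_one_right_eq_Icc, Finset.sum_Ico_eq_sum_range, Nat.add_sub_cancel]
        exact Finset.sum_congr rfl fun i _ => by rw [Nat.add_comm]
      have hB : ∑ i ∈ Finset.Icc (k + 1 + 1) (α - 1), ε i =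
          ∑ i ∈ Finset.Ico (k + 1) (α - 1), ε (i + 1) := by
        rw [← Finset.Ico_add_one_right_eq_Icc, Finset.sum_Ico_eq_sum_range,
          Finset.sum_Ico_eq_sum_range]
        have hn : α - 1 + 1 - (k + 1 + 1) = α - 1 - (k + 1) := by omega
        rw [hn]
        exact Finset.sum_congr rfl fun i _ => by congr 1; omega
      rw [prod_zpow_eq M hM0, prod_zpow_eq M hM0, hA, hB]
      have : ∑ i ∈ Finset.Ico (k + 1) (α - 1), -ε (i + 1) =
          -∑ i ∈ Finset.Ico (k + 1) (α - 1), ε (i + 1) := by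
        rw [Finset.sum_neg_distrib]
      rw [this, hb]
      simp only [hp, if_pos]
      rw [sub_eq_add_neg, zpow_add₀ hM0]
      ring
    · rw [if_neg hp, hb]
      simp [hp]
  rw [h00, h01]
end

section
/- Let W* = Y^{ε₁} X^{ε₂} Y^{ε₃} X^{ε₄} ⋯ Y^{ε_{α−2}} X^{ε_{α−1}} (the word W with the roles of X and Y exchanged), and for each entry write W̄_{ij}(M,λ) = W_{ij}(M⁻¹,λ), the corresponding entry of W computed with M replaced by M⁻¹ (λ unchanged). Then W* = [[W̄₂₂, W̄₁₂], [λ·W̄₁₂, W̄₁₁]]. -/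
open Matrix

lemma tr2 (a b c d : ℂ) : (!![a,b;c,d] : Mat)ᵀ = !![a,c;b,d] := by
  ext i j; fin_cases i <;> fin_cases j <;> simp

lemma inter_prod (N : Mat) : ∀ {l l' : List Mat},
    List.Forall₂ (fun a b => N * a = b * N) l l' → N * l.prod = l'.prod * N := by
  intro l l' h
  induction h with
  | nil => simp
  | cons hab _ ih =>
    simp only [List.prod_cons, ← mul_assoc, hab]
    rw [mul_assoc, ih, ← mul_assoc]

lemma inter_inv (N A B : Mat) (hA : IsUnit A.det) (hB : IsUnit B.det)
    (h : N * A = B * N) : N * A⁻¹ = B⁻¹ * N := by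
  have h2 : N * A * A⁻¹ = B * N * A⁻¹ := by rw [h]
  rw [Matrix.mul_nonsing_inv_cancel_right _ _ hA] at h2
  calc N * A⁻¹ = B⁻¹ * (B * (N * A⁻¹)) :=
        (Matrix.nonsing_inv_mul_cancel_left _ _ hB).symm
    _ = B⁻¹ * N := by rw [← mul_assoc B N A⁻¹, ← h2]

lemma inter_zpow (N A B : Mat) (hA : IsUnit A.det) (hB : IsUnit B.det)
    (h : N * A = B * N) (k : ℤ) (hk : k = 1 ∨ k = -1) : N * A ^ k = B ^ k * N := by
  rcases hk with rfl | rfl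
  · simpa using h
  · simpa using inter_inv N A B hA hB h

lemma wword_key (N A B A' B' : Mat)
    (hA : IsUnit A.det) (hB : IsUnit B.det) (hA' : IsUnit A'.det) (hB' : IsUnit B'.det)
    (h1 : N * Aᵀ = B' * N) (h2 : N * Bᵀ = A' * N)
    (α : ℕ) (hodd : Odd α) (hα : 3 ≤ α) (ε : ℕ → ℤ)
    (hε : ∀ i, 1 ≤ i → i ≤ α - 1 → ε i = 1 ∨ ε i = -1)
    (hsym : ∀ i, 1 ≤ i → i ≤ α - 1 → ε i = ε (α - i)) :
    N * (Wword α ε A B)ᵀ = Wword α ε A' B' * N := by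
  set n := α - 1 with hn
  rw [Wword, Wword, Matrix.transpose_list_prod, List.map_map]
  have hrev : ((List.range n).map (Matrix.transpose ∘ fun i =>
      (if (i + 1) % 2 = 1 then A else B) ^ ε (i + 1))).reverse
      = (List.range n).map fun i =>
        ((if (n - 1 - i + 1) % 2 = 1 then A else B) ^ ε (n - 1 - i + 1))ᵀ := by
    rw [← List.map_reverse, List.range_eq_range', List.reverse_range']
    simp [List.map_map, Function.comp, List.range_eq_range']
  rw [hrev]
  apply inter_prod
  rw [List.forall₂_map_right_iff, List.forall₂_map_left_iff, List.forall₂_same]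
  intro i hi
  rw [List.mem_range] at hi
  have hidx : n - 1 - i + 1 = α - (i + 1) := by omega
  have hje : ε (α - (i + 1)) = ε (i + 1) := (hsym (i + 1) (by omega) (by omega)).symm
  have hpar : (α - (i + 1)) % 2 = 1 ↔ ¬ ((i + 1) % 2 = 1) := by
    rcases hodd with ⟨k, hk⟩
    omega
  rw [hidx, hje, Matrix.transpose_zpow]
  by_cases hp : (i + 1) % 2 = 1
  · rw [if_neg (by rw [hpar]; tauto), if_pos hp]
    exact inter_zpow N Bᵀ A' (by simpa using hB) hA' h2 _ (hε (i+1) (by omega) (by omega))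
  · rw [if_pos (hpar.mpr hp), if_neg hp]
    exact inter_zpow N Aᵀ B' (by simpa using hA) hB' h1 _ (hε (i+1) (by omega) (by omega))

/-- Hoste–Shanahan's lemma on `W*`.
Let `W* = Y^{ε₁} X^{ε₂} ⋯ Y^{ε_{α−2}} X^{ε_{α−1}}` be the word `W` with the roles of
`X` and `Y` exchanged, and let `W̄` be `W` computed with `M` replaced by `M⁻¹`
(`λ` unchanged).  Then `W* = [[W̄₂₂, W̄₁₂], [λ·W̄₁₂, W̄₁₁]]`. -/
theorem wstar_formula (M : ℂ) (hM0 : M ≠ 0) (hM1 : M ≠ 1) (hMneg1 : M ≠ -1)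
    (lam : ℂ) (α : ℕ) (hodd : Odd α) (hα : 3 ≤ α) (ε : ℕ → ℤ)
    (hε : ∀ i, 1 ≤ i → i ≤ α - 1 → ε i = 1 ∨ ε i = -1)
    (hsym : ∀ i, 1 ≤ i → i ≤ α - 1 → ε i = ε (α - i))
    (Wstar Wbar : Mat)
    (hWstar : Wstar = Wword α ε !![M, 0; lam, M⁻¹] !![M, 1; 0, M⁻¹])
    (hWbar : Wbar = Wword α ε !![M⁻¹, 1; 0, (M⁻¹)⁻¹] !![M⁻¹, 0; lam, (M⁻¹)⁻¹]) :
    Wstar = !![Wbar 1 1, Wbar 0 1; lam * Wbar 0 1, Wbar 0 0] := by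
  have hdXm : IsUnit (!![M⁻¹, 1; 0, (M⁻¹)⁻¹] : Mat).det := by
    have h : (!![M⁻¹, 1; 0, (M⁻¹)⁻¹] : Mat).det = 1 := by
      rw [Matrix.det_fin_two_of]; field_simp; ring
    rw [h]; exact isUnit_one
  have hdYm : IsUnit (!![M⁻¹, 0; lam, (M⁻¹)⁻¹] : Mat).det := by
    have h : (!![M⁻¹, 0; lam, (M⁻¹)⁻¹] : Mat).det = 1 := by
      rw [Matrix.det_fin_two_of]; field_simp; ring
    rw [h]; exact isUnit_one
  have hdXM : IsUnit (!![M, 1; 0, M⁻¹] : Mat).det := by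
    have h : (!![M, 1; 0, M⁻¹] : Mat).det = 1 := by
      rw [Matrix.det_fin_two_of]; field_simp; ring
    rw [h]; exact isUnit_one
  have hdYM : IsUnit (!![M, 0; lam, M⁻¹] : Mat).det := by
    have h : (!![M, 0; lam, M⁻¹] : Mat).det = 1 := by
      rw [Matrix.det_fin_two_of]; field_simp; ring
    rw [h]; exact isUnit_one
  -- first intertwining: J * W̄ᵀ = W* * J
  have E1 : (!![0,1;1,0] : Mat) * (Wword α ε !![M⁻¹, 1; 0, (M⁻¹)⁻¹] !![M⁻¹, 0; lam, (M⁻¹)⁻¹])ᵀ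
      = Wword α ε !![M, 0; lam, M⁻¹] !![M, 1; 0, M⁻¹] * !![0,1;1,0] := by
    apply wword_key _ _ _ _ _ hdXm hdYm hdYM hdXM _ _ α hodd hα ε hε hsym
    · rw [tr2]; ext i j
      fin_cases i <;> fin_cases j <;>
        simp [Matrix.mul_apply, Fin.sum_univ_two, inv_inv]
    · rw [tr2]; ext i j
      fin_cases i <;> fin_cases j <;>
        simp [Matrix.mul_apply, Fin.sum_univ_two, inv_inv]
  -- second intertwining: D * W̄ᵀ = W̄ * D
  have E2 : (!![1,0;0,lam] : Mat) * (Wword α ε !![M⁻¹, 1; 0, (M⁻¹)⁻¹] !![M⁻¹, 0; lam, (M⁻¹)⁻¹])ᵀ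
      = Wword α ε !![M⁻¹, 1; 0, (M⁻¹)⁻¹] !![M⁻¹, 0; lam, (M⁻¹)⁻¹] * !![1,0;0,lam] := by
    apply wword_key _ _ _ _ _ hdXm hdYm hdXm hdYm _ _ α hodd hα ε hε hsym
    · rw [tr2]; ext i j
      fin_cases i <;> fin_cases j <;>
        simp [Matrix.mul_apply, Fin.sum_univ_two, mul_comm]
    · rw [tr2]; ext i j
      fin_cases i <;> fin_cases j <;>
        simp [Matrix.mul_apply, Fin.sum_univ_two, mul_comm]
  rw [← hWbar] at E1 E2
  rw [← hWstar] at E1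
  have e00 := congrFun (congrFun E1 0) 0
  have e01 := congrFun (congrFun E1 0) 1
  have e10 := congrFun (congrFun E1 1) 0
  have e11 := congrFun (congrFun E1 1) 1
  have f10 := congrFun (congrFun E2 1) 0
  simp [Matrix.mul_apply, Fin.sum_univ_two] at e00 e01 e10 e11 f10
  ext i j
  fin_cases i <;> fin_cases j
  · simpa using e01.symm
  · simpa using e00.symm
  · simp only [Fin.mk_one, Fin.zero_eta, Matrix.cons_val', Matrix.cons_val_zero,
      Matrix.empty_val', Matrix.cons_val_fin_one, Matrix.cons_val_one, Matrix.head_cons,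
      Matrix.head_fin_const, Matrix.of_apply]
    rw [← e11, ← f10]
  · simpa using e10.symm
end

section
/- For every n with 0 ≤ 2n ≤ α−1: F_{2n} = diag(f_{2n}(M,λ̃), f_{2n}(M⁻¹,λ̃)) and G_{2n} = diag(g_{2n}(M,λ̃), −λ̃·g_{2n}(M⁻¹,λ̃)), where f_{2n}(M,λ̃) = Σ_{k=0}^{n} c̃_{2k}^{2n}(M,ε)·λ̃ᵏ and g_{2n}(M,λ̃) = Σ_{k=0}^{n−1} c̃_{2k+1}^{2n}(M,ε)·λ̃ᵏ, computed from the truncated sequence (ε₁,…,ε_{2n}). -/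
/-- The pair `(F_i, G_i)` defined by the recursion `F₀ = I`, `G₀ = 0`,
`F_{2n+1} = F_{2n}·e^{−ε_{2n+1}}`, `G_{2n+1} = G_{2n}·e^{ε_{2n+1}} − ε_{2n+1}·P·F_{2n}`,
`F_{2n} = F_{2n−1}·e^{ε_{2n}} − ε_{2n}·Q·G_{2n−1}`, `G_{2n} = G_{2n−1}·e^{−ε_{2n}}`. -/
noncomputable def FG (ε : ℕ → ℤ) (e P Q : Mat) : ℕ → Mat × Mat
  | 0 => (1, 0)
  | i + 1 =>
    let p := FG ε e P Q i
    if (i + 1) % 2 = 1 then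
      (p.1 * e ^ (-ε (i + 1)), p.2 * e ^ ε (i + 1) - (ε (i + 1) : ℂ) • (P * p.1))
    else
      (p.1 * e ^ ε (i + 1) - (ε (i + 1) : ℂ) • (Q * p.2), p.2 * e ^ (-ε (i + 1)))


section Helpers

variable {n k s : ℕ} {ε : ℕ → ℤ} {x : ℂ}

lemma Adm.inj {v : Fin k → ℕ} (h : Adm n k s v) : Function.Injective v := by
  intro a b hab
  rcases lt_trichotomy a b with h' | h' | h'
  · exact absurd hab (h.1 a b h').ne
  · exact h'
  · exact absurd hab.symm (h.1 b a h').ne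

lemma Adm.k_le {v : Fin k → ℕ} (h : Adm n k s v) : k ≤ n := by
  calc k = Fintype.card (Fin k) := (Fintype.card_fin k).symm
    _ = (Finset.univ : Finset (Fin k)).card := Finset.card_univ.symm
    _ ≤ (Finset.Icc 1 n).card := Finset.card_le_card_of_injOn v
        (fun j _ => Finset.mem_Icc.2 (h.2.1 j)) h.inj.injOn
    _ = n := by simp

lemma adm_filter_card {v : Fin k → ℕ} (h : Adm n k s v) :
    ((Finset.Icc 1 n).filter fun t => ¬∃ j, v j = t).card = n - k := by
  have hsub : (Finset.univ.image v) ⊆ Finset.Icc 1 n := by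
    intro t ht
    obtain ⟨j, -, rfl⟩ := Finset.mem_image.1 ht
    exact Finset.mem_Icc.2 (h.2.1 j)
  have hset : ((Finset.Icc 1 n).filter fun t => ¬∃ j, v j = t)
      = Finset.Icc 1 n \ Finset.univ.image v := by
    ext t
    simp [Finset.mem_filter, Finset.mem_sdiff, Finset.mem_image]
  rw [hset, Finset.card_sdiff_of_subset hsub, Finset.card_image_of_injective _ h.inj]
  simp

lemma cT_eq_zero (hk : n < k) : cT n k ε x = 0 := by
  unfold cT
  apply Finset.sum_eq_zero
  intro i _
  rw [if_neg]
  intro hA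
  exact absurd hA.k_le (by omega)

end Helpers

section Zero

variable {n : ℕ} {ε : ℕ → ℤ} {x : ℂ}

lemma adm_zero {m : ℕ} : Adm m 0 1 (Fin.elim0 : Fin 0 → ℕ) :=
  ⟨fun j => j.elim0, fun j => j.elim0, fun j => j.elim0⟩

lemma cT_zero_eq (n : ℕ) (ε : ℕ → ℤ) (x : ℂ) :
    cT n 0 ε x = x ^ hatAltSum n ε (Fin.elim0 : Fin 0 → ℕ) := by
  unfold cT
  have : ∀ i : Fin 0 → Fin (n + 1),
      (if Adm n 0 1 (fun j => (i j : ℕ))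
       then (∏ j : Fin 0, (ε (i j : ℕ) : ℂ)) * x ^ hatAltSum n ε (fun j => (i j : ℕ))
       else 0) = x ^ hatAltSum n ε (Fin.elim0 : Fin 0 → ℕ) := by
    intro i
    have h1 : (fun j : Fin 0 => ((i j : ℕ))) = (Fin.elim0 : Fin 0 → ℕ) :=
      funext fun j => j.elim0
    rw [h1, if_pos adm_zero]
    simp
  rw [Finset.sum_congr rfl (fun i _ => this i)]
  rw [Finset.sum_const]
  have hcard : Fintype.card (Fin 0 → Fin (n + 1)) = 1 := by
    simp
  rw [Finset.card_univ, hcard, one_smul]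

lemma cT_zero_zero : cT 0 0 ε x = 1 := by
  rw [cT_zero_eq]
  simp [hatAltSum]

lemma cT_succ_zero' (x : ℂ) (hx : x ≠ 0) (ε : ℕ → ℤ) (n : ℕ) :
    cT (n + 1) 0 ε x = x ^ ((-1 : ℤ) ^ (n + 1) * ε (n + 1)) * cT n 0 ε x := by
  rw [cT_zero_eq, cT_zero_eq]
  have hsplit : hatAltSum (n + 1) ε (Fin.elim0 : Fin 0 → ℕ)
      = hatAltSum n ε (Fin.elim0 : Fin 0 → ℕ) + (-1 : ℤ) ^ (n + 1) * ε (n + 1) := by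
    unfold hatAltSum
    rw [Finset.sum_Icc_succ_top (by omega : 1 ≤ n + 1)]
    congr 1
    rw [if_neg (by rintro ⟨j, -⟩; exact j.elim0)]
    congr 2
    rw [Finset.filter_true_of_mem (fun t _ => by rintro ⟨j, -⟩; exact j.elim0)]
    simp

  rw [hsplit, zpow_add₀ hx]
  ring

end Zero

noncomputable def Term (n k : ℕ) (ε : ℕ → ℤ) (x : ℂ) (i : Fin k → Fin (n + 1)) : ℂ :=
  if Adm n k 1 (fun j => (i j : ℕ))
  then (∏ j : Fin k, (ε (i j : ℕ) : ℂ)) * x ^ hatAltSum n ε (fun j => (i j : ℕ))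
  else 0

lemma cT_eq_sum_Term (n k : ℕ) (ε : ℕ → ℤ) (x : ℂ) :
    cT n k ε x = ∑ i : Fin k → Fin (n + 1), Term n k ε x i := rfl

lemma cT_succ (x : ℂ) (hx : x ≠ 0) (ε : ℕ → ℤ) (n k : ℕ) :
    cT (n + 1) (k + 1) ε x
      = x ^ ((-1 : ℤ) ^ (n - k) * ε (n + 1)) * cT n (k + 1) ε x
        + (if (n + 1) % 2 = (k + 1) % 2 then (ε (n + 1) : ℂ) * cT n k ε x else 0) := by
  classical
  -- Part 2 : tuples avoiding the value `n+1`
  set emb : (Fin (k + 1) → Fin (n + 1)) → (Fin (k + 1) → Fin (n + 1 + 1)) :=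
    fun v j => (v j).castSucc with hemb
  have hembinj : Function.Injective emb := by
    intro v v' h
    funext j
    exact Fin.castSucc_injective _ (congrFun h j)
  have hwe : ∀ (v : Fin (k+1) → Fin (n+1)) (j : Fin (k+1)), ((emb v j : ℕ)) = (v j : ℕ) := by
    intro v j; simp [hemb]
  have hTemb : ∀ v, Term (n + 1) (k + 1) ε x (emb v)
      = x ^ ((-1 : ℤ) ^ (n - k) * ε (n + 1)) * Term n (k + 1) ε x v := by
    intro v
    have hw : (fun j => ((emb v j : ℕ))) = fun j => ((v j : ℕ)) := funext (hwe v)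
    unfold Term
    simp only [hwe]
    by_cases hA : Adm n (k + 1) 1 (fun j => ((v j : ℕ)))
    · have hA' : Adm (n + 1) (k + 1) 1 (fun j => ((v j : ℕ))) :=
        ⟨hA.1, fun j => ⟨(hA.2.1 j).1, by have := (hA.2.1 j).2; omega⟩, hA.2.2⟩
      rw [if_pos hA, if_pos hA']
      have hsplit : hatAltSum (n + 1) ε (fun j => ((v j : ℕ)))
          = hatAltSum n ε (fun j => ((v j : ℕ))) + (-1 : ℤ) ^ (n - k) * ε (n + 1) := by
        unfold hatAltSum
        rw [Finset.sum_Icc_succ_top (by omega : 1 ≤ n + 1)]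
        congr 1
        rw [if_neg (show ¬∃ j : Fin (k + 1), ((v j : ℕ)) = n + 1 by
          rintro ⟨j, hj⟩; have := (v j).is_le; omega)]
        have hc := adm_filter_card (n := n + 1) hA'
        rw [hc]
        congr 2
        omega
      rw [hsplit, zpow_add₀ hx]
      ring
    · have hA2 : ¬ Adm (n + 1) (k + 1) 1 (fun j => ((v j : ℕ))) := by
        intro h
        exact hA ⟨h.1, fun j => ⟨(h.2.1 j).1, (v j).is_le⟩, h.2.2⟩
      rw [if_neg hA, if_neg hA2, mul_zero]
  have hpart2 :
      (∑ i ∈ Finset.univ.filter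
        (fun i : Fin (k + 1) → Fin (n + 1 + 1) => ¬ i (Fin.last k) = Fin.last (n + 1)),
        Term (n + 1) (k + 1) ε x i)
      = x ^ ((-1 : ℤ) ^ (n - k) * ε (n + 1)) * cT n (k + 1) ε x := by
    have himg : ∑ i ∈ Finset.univ.image emb, Term (n + 1) (k + 1) ε x i
        = ∑ v : Fin (k + 1) → Fin (n + 1), Term (n + 1) (k + 1) ε x (emb v) :=
      Finset.sum_image (fun a _ b _ h => hembinj h)
    have hsubset : Finset.univ.image emb ⊆ Finset.univ.filter
        (fun i : Fin (k + 1) → Fin (n + 1 + 1) => ¬ i (Fin.last k) = Fin.last (n + 1)) := by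
      intro i hi
      obtain ⟨v, -, rfl⟩ := Finset.mem_image.1 hi
      refine Finset.mem_filter.2 ⟨Finset.mem_univ _, ?_⟩
      exact (Fin.castSucc_lt_last (v (Fin.last k))).ne
    have hzero : ∀ i ∈ Finset.univ.filter
        (fun i : Fin (k + 1) → Fin (n + 1 + 1) => ¬ i (Fin.last k) = Fin.last (n + 1)),
        i ∉ Finset.univ.image emb → Term (n + 1) (k + 1) ε x i = 0 := by
      intro i hi hni
      have hilast : ¬ i (Fin.last k) = Fin.last (n + 1) := (Finset.mem_filter.1 hi).2
      have hex : ∃ j : Fin (k + 1), i j = Fin.last (n + 1) := by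
        by_contra hno
        push_neg at hno
        exact hni (Finset.mem_image.2 ⟨fun j => (i j).castPred (hno j), Finset.mem_univ _, by
          funext j; simp [hemb, Fin.castSucc_castPred]⟩)
      obtain ⟨j, hj⟩ := hex
      refine if_neg (fun hA => ?_)
      have hjne : j ≠ Fin.last k := fun h => hilast (h ▸ hj)
      have hjlt : j < Fin.last k := (Fin.le_last j).lt_of_ne hjne
      have hmono : ((i j : ℕ)) < ((i (Fin.last k) : ℕ)) := hA.1 j (Fin.last k) hjlt
      have h1 : ((i j : ℕ)) = n + 1 := by rw [hj]; rfl
      have h2 : ((i (Fin.last k) : ℕ)) ≤ n + 1 := (hA.2.1 (Fin.last k)).2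
      omega
    rw [← Finset.sum_subset hsubset hzero, himg,
      Finset.sum_congr rfl (fun v _ => hTemb v), ← Finset.mul_sum, ← cT_eq_sum_Term]
  -- Part 1 : tuples whose last entry is the value `n+1`
  set emb1 : (Fin k → Fin (n + 1)) → (Fin (k + 1) → Fin (n + 1 + 1)) :=
    fun v => Fin.snoc (fun j => (v j).castSucc) (Fin.last (n + 1)) with hemb1
  have hw1 : ∀ (v : Fin k → Fin (n + 1)) (j : Fin k),
      ((emb1 v (Fin.castSucc j) : ℕ)) = (v j : ℕ) := by
    intro v j; simp [hemb1]
  have hw2 : ∀ v : Fin k → Fin (n + 1), ((emb1 v (Fin.last k) : ℕ)) = n + 1 := by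
    intro v; simp [hemb1]
  have hemb1inj : Function.Injective emb1 := by
    intro v v' h
    funext j
    have h2 := congrFun h (Fin.castSucc j)
    simp only [hemb1, Fin.snoc_castSucc] at h2
    exact Fin.castSucc_injective _ h2
  have hAdm_iff : ∀ v : Fin k → Fin (n + 1),
      Adm (n + 1) (k + 1) 1 (fun j => ((emb1 v j : ℕ)))
      ↔ ((n + 1) % 2 = (k + 1) % 2 ∧ Adm n k 1 (fun j => ((v j : ℕ)))) := by
    intro v
    constructor
    · rintro ⟨h1, h2, h3⟩
      refine ⟨?_, ?_, ?_, ?_⟩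
      · have hp := h3 (Fin.last k)
        simp only [hw2 v, Fin.val_last] at hp
        exact hp
      · intro j j' hjj'
        have hm := h1 (Fin.castSucc j) (Fin.castSucc j') (by simpa using hjj')
        simpa only [hw1 v] using hm
      · intro j
        have hb := h2 (Fin.castSucc j)
        simp only [hw1 v] at hb
        exact ⟨hb.1, (v j).is_le⟩
      · intro j
        have hp := h3 (Fin.castSucc j)
        simpa only [hw1 v, Fin.coe_castSucc] using hp
    · rintro ⟨hp, h1, h2, h3⟩
      refine ⟨?_, ?_, ?_⟩
      · intro j j' hjj'
        rcases Fin.eq_castSucc_or_eq_last j' with ⟨j1, rfl⟩ | rfl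
        · rcases Fin.eq_castSucc_or_eq_last j with ⟨j0, rfl⟩ | rfl
          · simp only [hw1 v]
            exact h1 j0 j1 (by simpa using hjj')
          · exact absurd hjj' (not_lt.2 (Fin.castSucc_lt_last j1).le)
        · rcases Fin.eq_castSucc_or_eq_last j with ⟨j0, rfl⟩ | rfl
          · simp only [hw1 v, hw2 v]
            have := (v j0).is_le; omega
          · exact absurd hjj' (lt_irrefl _)
      · intro j
        rcases Fin.eq_castSucc_or_eq_last j with ⟨j0, rfl⟩ | rfl
        · simp only [hw1 v]
          exact ⟨(h2 j0).1, by have := (v j0).is_le; omega⟩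
        · simp only [hw2 v]
          omega
      · intro j
        rcases Fin.eq_castSucc_or_eq_last j with ⟨j0, rfl⟩ | rfl
        · simp only [hw1 v, Fin.coe_castSucc]
          exact h3 j0
        · simp only [hw2 v, Fin.val_last]
          exact hp
  have hhat : ∀ v : Fin k → Fin (n + 1),
      hatAltSum (n + 1) ε (fun j => ((emb1 v j : ℕ)))
        = hatAltSum n ε (fun j => ((v j : ℕ))) := by
    intro v
    have hex : ∀ t : ℕ, t ≤ n →
        ((∃ j : Fin (k + 1), ((emb1 v j : ℕ)) = t) ↔ (∃ j : Fin k, ((v j : ℕ)) = t)) := by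
      intro t ht
      constructor
      · rintro ⟨j, hj⟩
        rcases Fin.eq_castSucc_or_eq_last j with ⟨j0, rfl⟩ | rfl
        · exact ⟨j0, by rwa [hw1 v] at hj⟩
        · rw [hw2 v] at hj; omega
      · rintro ⟨j, hj⟩
        exact ⟨Fin.castSucc j, by rwa [hw1 v]⟩
    unfold hatAltSum
    rw [Finset.sum_Icc_succ_top (by omega : 1 ≤ n + 1),
      if_pos ⟨Fin.last k, hw2 v⟩, add_zero]
    apply Finset.sum_congr rfl
    intro t ht
    have ht' : t ≤ n := (Finset.mem_Icc.1 ht).2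
    have h2 : ((Finset.Icc 1 t).filter fun s => ¬∃ j, ((emb1 v j : ℕ)) = s)
        = ((Finset.Icc 1 t).filter fun s => ¬∃ j : Fin k, ((v j : ℕ)) = s) := by
      apply Finset.filter_congr
      intro s hs
      exact not_congr (hex s (le_trans (Finset.mem_Icc.1 hs).2 ht'))
    exact if_congr (hex t ht') rfl (by rw [h2])
  have hprod : ∀ v : Fin k → Fin (n + 1),
      (∏ j : Fin (k + 1), (ε ((emb1 v j : ℕ)) : ℂ))
        = (∏ j : Fin k, (ε ((v j : ℕ)) : ℂ)) * (ε (n + 1) : ℂ) := by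
    intro v
    rw [Fin.prod_univ_castSucc]
    congr 1
    · exact Finset.prod_congr rfl (fun j _ => by rw [hw1 v])
    · rw [hw2 v]
  have hTsnoc : ∀ v : Fin k → Fin (n + 1), Term (n + 1) (k + 1) ε x (emb1 v)
      = if (n + 1) % 2 = (k + 1) % 2 then (ε (n + 1) : ℂ) * Term n k ε x v else 0 := by
    intro v
    unfold Term
    by_cases hp : (n + 1) % 2 = (k + 1) % 2
    · rw [if_pos hp]
      by_cases hA : Adm n k 1 (fun j => ((v j : ℕ)))
      · rw [if_pos ((hAdm_iff v).2 ⟨hp, hA⟩), if_pos hA, hhat v, hprod v]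
        ring
      · rw [if_neg (fun h => hA ((hAdm_iff v).1 h).2), if_neg hA, mul_zero]
    · rw [if_neg (fun h => hp ((hAdm_iff v).1 h).1), if_neg hp]
  have hpart1 : (∑ i ∈ Finset.univ.filter
        (fun i : Fin (k + 1) → Fin (n + 1 + 1) => i (Fin.last k) = Fin.last (n + 1)),
        Term (n + 1) (k + 1) ε x i)
      = (if (n + 1) % 2 = (k + 1) % 2 then (ε (n + 1) : ℂ) * cT n k ε x else 0) := by
    have himg : ∑ i ∈ Finset.univ.image emb1, Term (n + 1) (k + 1) ε x i
        = ∑ v : Fin k → Fin (n + 1), Term (n + 1) (k + 1) ε x (emb1 v) :=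
      Finset.sum_image (fun a _ b _ h => hemb1inj h)
    have hsubset : Finset.univ.image emb1 ⊆ Finset.univ.filter
        (fun i : Fin (k + 1) → Fin (n + 1 + 1) => i (Fin.last k) = Fin.last (n + 1)) := by
      intro i hi
      obtain ⟨v, -, rfl⟩ := Finset.mem_image.1 hi
      exact Finset.mem_filter.2 ⟨Finset.mem_univ _, by simp [hemb1]⟩
    have hzero : ∀ i ∈ Finset.univ.filter
        (fun i : Fin (k + 1) → Fin (n + 1 + 1) => i (Fin.last k) = Fin.last (n + 1)),
        i ∉ Finset.univ.image emb1 → Term (n + 1) (k + 1) ε x i = 0 := by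
      intro i hi hni
      have hilast : i (Fin.last k) = Fin.last (n + 1) := (Finset.mem_filter.1 hi).2
      have hex : ∃ j : Fin k, i (Fin.castSucc j) = Fin.last (n + 1) := by
        by_contra hno
        push_neg at hno
        refine hni (Finset.mem_image.2
          ⟨fun j => (i (Fin.castSucc j)).castPred (hno j), Finset.mem_univ _, ?_⟩)
        funext j
        rcases Fin.eq_castSucc_or_eq_last j with ⟨j0, rfl⟩ | rfl
        · simp [hemb1]
        · simp [hemb1, hilast.symm]
      obtain ⟨j, hj⟩ := hex
      refine if_neg (fun hA => ?_)
      have hmono : ((i (Fin.castSucc j) : ℕ)) < ((i (Fin.last k) : ℕ)) :=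
        hA.1 (Fin.castSucc j) (Fin.last k) (Fin.castSucc_lt_last j)
      have h1 : ((i (Fin.castSucc j) : ℕ)) = n + 1 := by rw [hj]; rfl
      have h2 : ((i (Fin.last k) : ℕ)) ≤ n + 1 := (hA.2.1 (Fin.last k)).2
      omega
    rw [← Finset.sum_subset hsubset hzero, himg,
      Finset.sum_congr rfl (fun v _ => hTsnoc v)]
    by_cases hp : (n + 1) % 2 = (k + 1) % 2
    · simp only [if_pos hp, ← Finset.mul_sum, ← cT_eq_sum_Term]
    · simp only [if_neg hp, Finset.sum_const_zero]
  rw [cT_eq_sum_Term,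
    ← Finset.sum_filter_add_sum_filter_not Finset.univ
      (fun i : Fin (k + 1) → Fin (n + 1 + 1) => i (Fin.last k) = Fin.last (n + 1)),
    hpart1, hpart2]
  ring

section Recs

variable {x : ℂ} {ε : ℕ → ℤ}

lemma rec_zero (hx : x ≠ 0) (ε : ℕ → ℤ) (n : ℕ) :
    cT (2 * n + 2) 0 ε x
      = x ^ (ε (2 * n + 2)) * x ^ (-(ε (2 * n + 1))) * cT (2 * n) 0 ε x := by
  have h1 := cT_succ_zero' x hx ε (2 * n + 1)
  have h2 := cT_succ_zero' x hx ε (2 * n)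
  rw [show 2 * n + 1 + 1 = 2 * n + 2 by ring] at h1
  have s1 : ((-1 : ℤ)) ^ (2 * n + 1 + 1) = 1 := Even.neg_one_pow ⟨n + 1, by ring⟩
  have s2 : ((-1 : ℤ)) ^ (2 * n + 1) = -1 := Odd.neg_one_pow ⟨n, by ring⟩
  rw [s1, one_mul] at h1
  rw [s2, neg_one_mul] at h2
  rw [h1, h2]
  ring

lemma rec_even (hx : x ≠ 0) (ε : ℕ → ℤ) (n m : ℕ) :
    cT (2 * n + 2) (2 * m + 2) ε x
      = x ^ (ε (2 * n + 2)) * x ^ (-(ε (2 * n + 1))) * cT (2 * n) (2 * m + 2) ε x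
        + (ε (2 * n + 2) : ℂ) * x ^ (ε (2 * n + 1)) * cT (2 * n) (2 * m + 1) ε x
        + (ε (2 * n + 1) : ℂ) * (ε (2 * n + 2) : ℂ) * cT (2 * n) (2 * m) ε x := by
  have h1 := cT_succ x hx ε (2 * n + 1) (2 * m + 1)
  rw [show 2 * n + 1 + 1 = 2 * n + 2 by ring, show 2 * m + 1 + 1 = 2 * m + 2 by ring] at h1
  rw [show ((-1 : ℤ)) ^ (2 * n + 1 - (2 * m + 1)) = 1 from Even.neg_one_pow ⟨n - m, by omega⟩,
    one_mul, if_pos (by omega : (2 * n + 2) % 2 = (2 * m + 2) % 2)] at h1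
  have h2 : cT (2 * n + 1) (2 * m + 2) ε x = x ^ (-(ε (2 * n + 1))) * cT (2 * n) (2 * m + 2) ε x := by
    by_cases hm : m + 1 ≤ n
    · have h := cT_succ x hx ε (2 * n) (2 * m + 1)
      rw [show 2 * m + 1 + 1 = 2 * m + 2 by ring] at h
      rw [show ((-1 : ℤ)) ^ (2 * n - (2 * m + 1)) = -1 from Odd.neg_one_pow ⟨n - m - 1, by omega⟩,
        neg_one_mul, if_neg (by omega : ¬ (2 * n + 1) % 2 = (2 * m + 2) % 2)] at h
      rw [h, add_zero]
    · rw [cT_eq_zero (by omega), cT_eq_zero (by omega), mul_zero]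
  have h3 := cT_succ x hx ε (2 * n) (2 * m)
  rw [show 2 * m + 1 = 2 * m + 1 from rfl] at h3
  rw [show ((-1 : ℤ)) ^ (2 * n - 2 * m) = 1 from Even.neg_one_pow ⟨n - m, by omega⟩,
    one_mul, if_pos (by omega : (2 * n + 1) % 2 = (2 * m + 1) % 2)] at h3
  rw [h1, h2, h3]
  ring

lemma rec_odd (hx : x ≠ 0) (ε : ℕ → ℤ) (n m : ℕ) (hm : m ≤ n) :
    cT (2 * n + 2) (2 * m + 1) ε x
      = x ^ (ε (2 * n + 1)) * x ^ (-(ε (2 * n + 2))) * cT (2 * n) (2 * m + 1) ε x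
        + (ε (2 * n + 1) : ℂ) * x ^ (-(ε (2 * n + 2))) * cT (2 * n) (2 * m) ε x := by
  have h1 := cT_succ x hx ε (2 * n + 1) (2 * m)
  rw [show 2 * n + 1 + 1 = 2 * n + 2 by ring, show 2 * m + 1 = 2 * m + 1 from rfl] at h1
  rw [show ((-1 : ℤ)) ^ (2 * n + 1 - 2 * m) = -1 from Odd.neg_one_pow ⟨n - m, by omega⟩,
    neg_one_mul, if_neg (by omega : ¬ (2 * n + 2) % 2 = (2 * m + 1) % 2), add_zero] at h1
  have h3 := cT_succ x hx ε (2 * n) (2 * m)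
  rw [show ((-1 : ℤ)) ^ (2 * n - 2 * m) = 1 from Even.neg_one_pow ⟨n - m, by omega⟩,
    one_mul, if_pos (by omega : (2 * n + 1) % 2 = (2 * m + 1) % 2)] at h3
  rw [h1, h3]
  ring

end Recs

lemma f_succ {x : ℂ} (hx : x ≠ 0) (ε : ℕ → ℤ) (L : ℂ) (n : ℕ) :
    ∑ k ∈ Finset.range (n + 2), cT (2 * n + 2) (2 * k) ε x * L ^ k
      = x ^ (ε (2 * n + 2)) * x ^ (-(ε (2 * n + 1)))
          * (∑ k ∈ Finset.range (n + 1), cT (2 * n) (2 * k) ε x * L ^ k)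
        + (ε (2 * n + 2) : ℂ) * x ^ (ε (2 * n + 1)) * L
          * (∑ k ∈ Finset.range n, cT (2 * n) (2 * k + 1) ε x * L ^ k)
        + (ε (2 * n + 1) : ℂ) * (ε (2 * n + 2) : ℂ) * L
          * (∑ k ∈ Finset.range (n + 1), cT (2 * n) (2 * k) ε x * L ^ k) := by
  set F : ℂ := ∑ k ∈ Finset.range (n + 1), cT (2 * n) (2 * k) ε x * L ^ k with hF
  set G : ℂ := ∑ k ∈ Finset.range n, cT (2 * n) (2 * k + 1) ε x * L ^ k with hG
  have hterm : ∀ m, cT (2 * n + 2) (2 * (m + 1)) ε x * L ^ (m + 1)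
      = x ^ (ε (2 * n + 2)) * x ^ (-(ε (2 * n + 1))) * (cT (2 * n) (2 * m + 2) ε x * L ^ (m + 1))
        + (ε (2 * n + 2) : ℂ) * x ^ (ε (2 * n + 1)) * L * (cT (2 * n) (2 * m + 1) ε x * L ^ m)
        + (ε (2 * n + 1) : ℂ) * (ε (2 * n + 2) : ℂ) * L * (cT (2 * n) (2 * m) ε x * L ^ m) := by
    intro m
    rw [show 2 * (m + 1) = 2 * m + 2 by ring, rec_even hx ε n m]
    ring
  rw [Finset.sum_range_succ']
  rw [Finset.sum_congr rfl (fun m _ => hterm m)]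
  rw [show (2 * 0 : ℕ) = 0 by ring, pow_zero, mul_one, rec_zero hx ε n]
  have e1 : ∑ m ∈ Finset.range (n + 1), cT (2 * n) (2 * m + 2) ε x * L ^ (m + 1)
      = F - cT (2 * n) 0 ε x := by
    rw [Finset.sum_range_succ, cT_eq_zero (by omega : 2 * n < 2 * n + 2), zero_mul, add_zero,
      hF, Finset.sum_range_succ']
    have e11 : ∑ i ∈ Finset.range n, cT (2 * n) (2 * (i + 1)) ε x * L ^ (i + 1)
        = ∑ i ∈ Finset.range n, cT (2 * n) (2 * i + 2) ε x * L ^ (i + 1) :=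
      Finset.sum_congr rfl (fun m _ => by rw [show 2 * (m + 1) = 2 * m + 2 by ring])
    rw [e11, show (2 * 0 : ℕ) = 0 by ring, pow_zero, mul_one]
    ring
  have e2 : ∑ m ∈ Finset.range (n + 1), cT (2 * n) (2 * m + 1) ε x * L ^ m = G := by
    rw [Finset.sum_range_succ, cT_eq_zero (by omega : 2 * n < 2 * n + 1), zero_mul, add_zero, hG]
  rw [Finset.sum_add_distrib, Finset.sum_add_distrib, ← Finset.mul_sum, ← Finset.mul_sum,
    ← Finset.mul_sum, e1, e2, ← hF]
  ring

lemma g_succ {x : ℂ} (hx : x ≠ 0) (ε : ℕ → ℤ) (L : ℂ) (n : ℕ) :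
    ∑ k ∈ Finset.range (n + 1), cT (2 * n + 2) (2 * k + 1) ε x * L ^ k
      = x ^ (ε (2 * n + 1)) * x ^ (-(ε (2 * n + 2)))
          * (∑ k ∈ Finset.range n, cT (2 * n) (2 * k + 1) ε x * L ^ k)
        + (ε (2 * n + 1) : ℂ) * x ^ (-(ε (2 * n + 2)))
          * (∑ k ∈ Finset.range (n + 1), cT (2 * n) (2 * k) ε x * L ^ k) := by
  set F : ℂ := ∑ k ∈ Finset.range (n + 1), cT (2 * n) (2 * k) ε x * L ^ k with hF
  set G : ℂ := ∑ k ∈ Finset.range n, cT (2 * n) (2 * k + 1) ε x * L ^ k with hG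
  have hterm : ∀ m ∈ Finset.range (n + 1), cT (2 * n + 2) (2 * m + 1) ε x * L ^ m
      = x ^ (ε (2 * n + 1)) * x ^ (-(ε (2 * n + 2))) * (cT (2 * n) (2 * m + 1) ε x * L ^ m)
        + (ε (2 * n + 1) : ℂ) * x ^ (-(ε (2 * n + 2))) * (cT (2 * n) (2 * m) ε x * L ^ m) := by
    intro m hm
    have hm' : m ≤ n := Nat.lt_succ_iff.1 (Finset.mem_range.1 hm)
    rw [rec_odd hx ε n m hm']
    ring
  rw [Finset.sum_congr rfl hterm]
  have e2 : ∑ m ∈ Finset.range (n + 1), cT (2 * n) (2 * m + 1) ε x * L ^ m = G := by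
    rw [Finset.sum_range_succ, cT_eq_zero (by omega : 2 * n < 2 * n + 1), zero_mul, add_zero, hG]
  rw [Finset.sum_add_distrib, ← Finset.mul_sum, ← Finset.mul_sum, e2, ← hF]

lemma epow (M : ℂ) (hM : M ≠ 0) (z : ℤ) :
    (!![M, 0; 0, M⁻¹] : Matrix (Fin 2) (Fin 2) ℂ) ^ z = !![M ^ z, 0; 0, M ^ (-z)] := by
  have key : ∀ a b : ℤ, a + b = 0 → M ^ a * M ^ b = 1 := by
    intro a b hab
    rw [← zpow_add₀ hM, hab, zpow_zero]
  have hn : ∀ n : ℕ, (!![M, 0; 0, M⁻¹] : Matrix (Fin 2) (Fin 2) ℂ) ^ n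
      = !![M ^ (n:ℤ), 0; 0, M ^ (-(n:ℤ))] := by
    intro n
    induction n with
    | zero => simp [Matrix.one_fin_two]
    | succ m ih =>
      rw [pow_succ, ih, Matrix.mul_fin_two,
        show ((m+1 : ℕ) : ℤ) = (m : ℤ) + 1 by push_cast; ring]
      have e1 : M ^ ((m:ℤ)+1) = M ^ (m:ℤ) * M := by rw [zpow_add₀ hM, zpow_one]
      have e2 : M ^ (-((m:ℤ)+1)) = M ^ (-(m:ℤ)) * M⁻¹ := by
        rw [show -((m:ℤ)+1) = -(m:ℤ) + (-1) by ring, zpow_add₀ hM, zpow_neg_one]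
      rw [e1, e2]
      norm_num
  cases z with
  | ofNat n => simpa using hn n
  | negSucc n =>
    rw [zpow_negSucc, hn (n+1), Int.negSucc_eq, neg_neg]
    apply Matrix.inv_eq_right_inv
    rw [Matrix.mul_fin_two, show ((n+1:ℕ):ℤ) = (n:ℤ)+1 by push_cast; ring]
    have h1 := key ((n:ℤ)+1) (-1 + -(n:ℤ)) (by ring)
    have h2 := key (-1 + -(n:ℤ)) ((n:ℤ)+1) (by ring)
    rw [Matrix.one_fin_two]
    norm_num [h1, h2]

set_option maxHeartbeats 2000000 in
/-- diagonal form of `F_{2n}` and `G_{2n}`.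
With `e = diag(M,M⁻¹)`, `P = diag(−1,λ̃)`, `Q = diag(−λ̃,1)` and `λ̃ = λ + z²`:
for `0 ≤ 2n ≤ α−1`, `F_{2n} = diag(f_{2n}(M,λ̃), f_{2n}(M⁻¹,λ̃))` and
`G_{2n} = diag(g_{2n}(M,λ̃), −λ̃·g_{2n}(M⁻¹,λ̃))`, where
`f_{2n}(M,λ̃) = Σ_{k=0}^{n} c̃_{2k}^{2n}(M,ε)·λ̃ᵏ` and
`g_{2n}(M,λ̃) = Σ_{k=0}^{n−1} c̃_{2k+1}^{2n}(M,ε)·λ̃ᵏ`. -/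
theorem FG_diagonal (M : ℂ) (hM0 : M ≠ 0) (hM1 : M ≠ 1) (hMneg1 : M ≠ -1)
    (lam : ℂ) (α : ℕ) (hodd : Odd α) (hα : 3 ≤ α) (ε : ℕ → ℤ)
    (hε : ∀ i, 1 ≤ i → i ≤ α - 1 → ε i = 1 ∨ ε i = -1)
    (hsym : ∀ i, 1 ≤ i → i ≤ α - 1 → ε i = ε (α - i))
    (lamT : ℂ) (hlamT : lamT = lam + (M - M⁻¹) ^ 2)
    (e P Q : Mat) (he : e = !![M, 0; 0, M⁻¹])
    (hP : P = !![-1, 0; 0, lamT]) (hQ : Q = !![-lamT, 0; 0, 1]) :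
    ∀ n : ℕ, 2 * n ≤ α - 1 →
      (FG ε e P Q (2 * n)).1 =
        !![∑ k ∈ Finset.range (n + 1), cT (2 * n) (2 * k) ε M * lamT ^ k, 0;
           0, ∑ k ∈ Finset.range (n + 1), cT (2 * n) (2 * k) ε M⁻¹ * lamT ^ k] ∧
      (FG ε e P Q (2 * n)).2 =
        !![∑ k ∈ Finset.range n, cT (2 * n) (2 * k + 1) ε M * lamT ^ k, 0;
           0, -lamT * ∑ k ∈ Finset.range n, cT (2 * n) (2 * k + 1) ε M⁻¹ * lamT ^ k] := by
  have hMi0 : (M⁻¹ : ℂ) ≠ 0 := inv_ne_zero hM0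
  have he1 : ∀ z : ℤ, e ^ z = !![M ^ z, 0; 0, M ^ (-z)] := by
    rw [he]; exact epow M hM0
  have hinv : ∀ z : ℤ, (M⁻¹ : ℂ) ^ z = M ^ (-z) := fun z => by rw [inv_zpow, ← zpow_neg]
  intro n
  induction n with
  | zero =>
    intro _
    constructor
    · ext i j
      fin_cases i <;> fin_cases j <;>
        simp [FG, cT_zero_zero, Finset.sum_range_one]
    · ext i j
      fin_cases i <;> fin_cases j <;> simp [FG]
  | succ n ih =>
    intro h2
    obtain ⟨hF, hG⟩ := ih (by omega)
    have hfs := f_succ hM0 ε lamT n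
    have hfs' := f_succ hMi0 ε lamT n
    have hgs := g_succ hM0 ε lamT n
    have hgs' := g_succ hMi0 ε lamT n
    simp only [hinv, neg_neg] at hfs' hgs'
    have hodd1 : (2 * n + 1) % 2 = 1 := by omega
    have heven1 : (2 * n + 1 + 1) % 2 = 0 := by omega
    rw [show 2 * (n + 1) = 2 * n + 1 + 1 by ring]
    simp only [FG, hodd1, heven1]
    rw [if_pos (trivial : True)]
    rw [if_neg (by norm_num : ¬ ((0:ℕ) = 1))]
    simp only [show 2 * n + 1 + 1 = 2 * n + 2 from by ring, show n + 1 + 1 = n + 2 from by ring]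
    rw [hF, hG, hP, hQ]
    simp only [he1]
    constructor
    · ext i j
      fin_cases i <;> fin_cases j <;>
        simp only [Matrix.mul_apply, Fin.sum_univ_two, Matrix.sub_apply, Matrix.smul_apply, Matrix.of_apply, Matrix.vecHead, Matrix.vecTail,
          Matrix.cons_val_zero, Matrix.cons_val_one, Matrix.head_cons, Matrix.head_fin_const,
          Matrix.cons_val', Matrix.empty_val', Matrix.cons_val_fin_one, smul_eq_mul, Fin.isValue,
          Fin.mk_zero, Fin.mk_one, Fin.zero_eta, Fin.mk_one,
          mul_zero, zero_mul, add_zero, zero_add, mul_one, neg_zero, sub_zero, zero_sub,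
          mul_neg, neg_neg, neg_mul, one_mul]
      · rw [hfs]; ring
      · rw [hfs']; ring
    · ext i j
      fin_cases i <;> fin_cases j <;>
        simp only [Matrix.mul_apply, Fin.sum_univ_two, Matrix.sub_apply, Matrix.smul_apply, Matrix.of_apply, Matrix.vecHead, Matrix.vecTail,
          Matrix.cons_val_zero, Matrix.cons_val_one, Matrix.head_cons, Matrix.head_fin_const,
          Matrix.cons_val', Matrix.empty_val', Matrix.cons_val_fin_one, smul_eq_mul, Fin.isValue,
          Fin.mk_zero, Fin.mk_one, Fin.zero_eta, Fin.mk_one,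
          mul_zero, zero_mul, add_zero, zero_add, mul_one, neg_zero, sub_zero, zero_sub,
          mul_neg, neg_neg, neg_mul, one_mul]
      · rw [hgs]; ring
      · rw [hgs']; ring
end
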